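/- arXiv:quant-ph/0302031 — 6 statements merged into one kernel-verified Lean document; each statement's English description precedes it below -/
import Mathlib

section
/- Let d ≥ 1 and let Φ be the linear map on d×d complex matrices defined by Φ(ρ) = Σ_{k=1}^N R_k · Tr(F_k ρ), where each R_k is a density matrix and each F_k is a positive semidefinite d×d matrix. Then for every n ≥ 1 and every positive semidefinite matrix Γ indexed by (Fin n × Fin d), the matrix (I_n ⊗ Φ)(Γ) is separable. (Implication (A) ⇒ (B) of Theorem 2.) -/
open Matrix Kronecker BigOperators ComplexOrder

noncomputable section

/-- Blockwise action of `I_n ⊗ Φ` on matrices indexed by `Fin n × Fin d`. -/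
def tensorId (n : ℕ) {d e : ℕ}
    (Φ : Matrix (Fin d) (Fin d) ℂ → Matrix (Fin e) (Fin e) ℂ)
    (Γ : Matrix (Fin n × Fin d) (Fin n × Fin d) ℂ) :
    Matrix (Fin n × Fin e) (Fin n × Fin e) ℂ :=
  fun p q => Φ (fun a b => Γ (p.1, a) (q.1, b)) p.2 q.2

/-- A matrix indexed by `Fin n × Fin d` is separable if it is a finite sum of Kronecker
products of positive semidefinite matrices. -/
def IsSeparableMat {n d : ℕ} (Γ : Matrix (Fin n × Fin d) (Fin n × Fin d) ℂ) : Prop :=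
  ∃ (N : ℕ) (A : Fin N → Matrix (Fin n) (Fin n) ℂ)
    (B : Fin N → Matrix (Fin d) (Fin d) ℂ),
    (∀ i, (A i).PosSemidef) ∧ (∀ i, (B i).PosSemidef) ∧ Γ = ∑ i, (A i) ⊗ₖ (B i)

/-- A map on `d × d` matrices is entanglement breaking if `I_n ⊗ Φ` sends every
positive semidefinite matrix to a separable one. -/
def EntBreaking {d : ℕ} (Φ : Matrix (Fin d) (Fin d) ℂ → Matrix (Fin d) (Fin d) ℂ) : Prop :=
  ∀ n : ℕ, 1 ≤ n → ∀ Γ : Matrix (Fin n × Fin d) (Fin n × Fin d) ℂ,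
    Γ.PosSemidef → IsSeparableMat (tensorId n Φ Γ)

/-- Complete positivity: `I_n ⊗ Φ` preserves positive semidefiniteness for all `n ≥ 1`. -/
def CompletelyPositive {d e : ℕ}
    (Φ : Matrix (Fin d) (Fin d) ℂ → Matrix (Fin e) (Fin e) ℂ) : Prop :=
  ∀ n : ℕ, 1 ≤ n → ∀ Γ : Matrix (Fin n × Fin d) (Fin n × Fin d) ℂ,
    Γ.PosSemidef → (tensorId n Φ Γ).PosSemidef

def TracePreserving {d : ℕ}
    (Φ : Matrix (Fin d) (Fin d) ℂ → Matrix (Fin d) (Fin d) ℂ) : Prop :=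
  ∀ X, (Φ X).trace = X.trace

/-- The maximally entangled state `|β⟩⟨β|`. -/
def maxEnt (d : ℕ) : Matrix (Fin d × Fin d) (Fin d × Fin d) ℂ :=
  fun p q => if p.1 = p.2 ∧ q.1 = q.2 then (1 : ℂ) / d else 0

/-- The Choi matrix `(I_d ⊗ Φ)(|β⟩⟨β|)`. -/
def choiMatrix {d : ℕ} (Φ : Matrix (Fin d) (Fin d) ℂ → Matrix (Fin d) (Fin d) ℂ) :
    Matrix (Fin d × Fin d) (Fin d × Fin d) ℂ :=
  tensorId d Φ (maxEnt d)

/-- The rank-one matrix `|v⟩⟨v|`. -/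
def rankOne {d : ℕ} (v : Fin d → ℂ) : Matrix (Fin d) (Fin d) ℂ :=
  Matrix.vecMulVec v (star v)

/-- Completely positive trace-preserving (linear) maps. -/
def IsCPTP {d : ℕ} (Φ : Matrix (Fin d) (Fin d) ℂ → Matrix (Fin d) (Fin d) ℂ) : Prop :=
  IsLinearMap ℂ Φ ∧ CompletelyPositive Φ ∧ TracePreserving Φ

/-- EBT maps: completely positive, trace-preserving, entanglement-breaking linear maps. -/
def IsEBT {d : ℕ} (Φ : Matrix (Fin d) (Fin d) ℂ → Matrix (Fin d) (Fin d) ℂ) : Prop :=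
  IsCPTP Φ ∧ EntBreaking Φ

/-- `Φ` is an extreme point of the set of maps satisfying `P`. -/
def IsExtremePointOf {d : ℕ}
    (P : (Matrix (Fin d) (Fin d) ℂ → Matrix (Fin d) (Fin d) ℂ) → Prop)
    (Φ : Matrix (Fin d) (Fin d) ℂ → Matrix (Fin d) (Fin d) ℂ) : Prop :=
  P Φ ∧ ∀ Φ₁ Φ₂, P Φ₁ → P Φ₂ → ∀ a : ℝ, 0 < a → a < 1 →
    Φ = (fun ρ => (a : ℂ) • Φ₁ ρ + ((1 - a : ℝ) : ℂ) • Φ₂ ρ) →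
    Φ₁ = Φ ∧ Φ₂ = Φ

lemma sum_ite_const' {α : Type*} [Fintype α] (P : Prop) [Decidable P] (f : α → ℂ) :
    (∑ a : α, if P then f a else 0) = if P then ∑ a : α, f a else 0 := by
  split <;> simp

/-- a map in Holevo form is entanglement breaking ((A) ⇒ (B) of Theorem 2). -/
theorem holevo_form_implies_entanglement_breaking
    {d : ℕ} (hd : 1 ≤ d) (N : ℕ)
    (R F : Fin N → Matrix (Fin d) (Fin d) ℂ)
    (hR : ∀ k, (R k).PosSemidef ∧ (R k).trace = 1)
    (hF : ∀ k, (F k).PosSemidef)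
    (Φ : Matrix (Fin d) (Fin d) ℂ →ₗ[ℂ] Matrix (Fin d) (Fin d) ℂ)
    (hΦ : ∀ ρ, Φ ρ = ∑ k, ((F k * ρ).trace) • R k) :
    ∀ n : ℕ, 1 ≤ n → ∀ Γ : Matrix (Fin n × Fin d) (Fin n × Fin d) ℂ,
      Γ.PosSemidef → IsSeparableMat (tensorId n (fun ρ => Φ ρ) Γ) := by
  intro n hn Γ hΓ
  refine ⟨N, fun k => fun i j => ((F k) * Matrix.of (fun a b => Γ (i, a) (j, b))).trace, R,
    ?_, fun k => (hR k).1, ?_⟩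
  · intro k
    obtain ⟨C, hC⟩ : ∃ C : Matrix (Fin d) (Fin d) ℂ, F k = Cᴴ * C := by
      open MatrixOrder in
      exact CStarAlgebra.nonneg_iff_eq_star_mul_self.mp (hF k).nonneg
    set M : Fin d → Matrix (Fin n) (Fin n × Fin d) ℂ :=
      fun c => Matrix.of fun i p => if p.1 = i then C c p.2 else 0 with hM
    have key : (fun i j => ((F k) * Matrix.of (fun a b => Γ (i, a) (j, b))).trace
        : Matrix (Fin n) (Fin n) ℂ) = ∑ c : Fin d, (M c) * Γ * (M c)ᴴ := by
      ext i j
      simp only [Finset.sum_apply, Matrix.sum_apply, Matrix.mul_apply, Matrix.trace,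
        Matrix.diag, Matrix.conjTranspose_apply, hC, hM, Fintype.sum_prod_type]
      simp only [ite_mul, zero_mul, mul_ite, mul_zero, apply_ite (star : ℂ → ℂ), star_zero,
        sum_ite_const', Finset.sum_ite_eq', Finset.mem_univ, if_true, Matrix.of_apply,
        Finset.sum_mul, Finset.mul_sum]
      have swap_inner : ∀ f : Fin d → Fin d → Fin d → ℂ,
          (∑ x, ∑ y, ∑ z, f x y z) = ∑ x, ∑ z, ∑ y, f x y z :=
        fun f => Finset.sum_congr rfl fun x _ => Finset.sum_comm
      conv_lhs => rw [swap_inner, Finset.sum_comm]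
      refine Finset.sum_congr rfl fun c _ => Finset.sum_congr rfl fun b _ =>
        Finset.sum_congr rfl fun a _ => by ring
    show Matrix.PosSemidef (fun i j => ((F k) * Matrix.of (fun a b => Γ (i, a) (j, b))).trace)
    rw [key]
    refine Finset.sum_induction _ Matrix.PosSemidef (fun A B hA hB => hA.add hB)
      (Matrix.PosSemidef.zero) (fun c _ => hΓ.mul_mul_conjTranspose_same (M c))
  · ext ⟨i, a⟩ ⟨j, b⟩
    simp only [tensorId, hΦ, Matrix.sum_apply, Matrix.kroneckerMap_apply,
      Matrix.smul_apply, smul_eq_mul]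
    erw [hΦ]
    simp only [Matrix.sum_apply, Matrix.smul_apply, smul_eq_mul]
    exact Finset.sum_congr rfl fun x _ => rfl
end
end

section
/- Let d ≥ 1 and let Φ be a linear map on d×d complex matrices whose Choi matrix (I_d ⊗ Φ)(|β⟩⟨β|) is separable. Then there exist a finite family of vectors ψ_k, φ_k ∈ ℂ^d such that Φ(ρ) = Σ_k |ψ_k⟩⟨ψ_k| · ⟨φ_k, ρ φ_k⟩ for all d×d matrices ρ. Moreover, if Φ is also trace-preserving, the vectors can be chosen so that Σ_k |φ_k⟩⟨φ_k| = I. (Implication (C) ⇒ (A),(D) of Theorem 2.) -/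
open Matrix Kronecker BigOperators ComplexOrder

noncomputable section

lemma rankOne_apply' {d : ℕ} (v : Fin d → ℂ) (a b : Fin d) :
    rankOne v a b = v a * star (v b) := rfl

/-- Every PSD matrix is a sum of `d` rank-one matrices. -/
lemma psd_sum_rankOne {d : ℕ} {M : Matrix (Fin d) (Fin d) ℂ} (hM : M.PosSemidef) :
    ∃ v : Fin d → (Fin d → ℂ), M = ∑ l, rankOne (v l) := by
  obtain ⟨B, hB⟩ : ∃ B : Matrix (Fin d) (Fin d) ℂ, M = Bᴴ * B := by
    open scoped MatrixOrder in exact CStarAlgebra.nonneg_iff_eq_star_mul_self.mp hM.nonneg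
  refine ⟨fun l a => star (B l a), ?_⟩
  ext a b
  simp [hB, Matrix.mul_apply, Matrix.sum_apply, rankOne, Matrix.vecMulVec_apply,
    Matrix.conjTranspose_apply]

lemma quad_eq {d : ℕ} (ρ : Matrix (Fin d) (Fin d) ℂ) (v : Fin d → ℂ) :
    ∑ i, ∑ j, ρ i j * rankOne v i j = star (star v) ⬝ᵥ ρ *ᵥ star v := by
  simp only [dotProduct, Matrix.mulVec, Pi.star_apply, star_star, rankOne,
    Matrix.vecMulVec_apply, Finset.mul_sum, dotProduct]
  refine Finset.sum_congr rfl fun i _ => Finset.sum_congr rfl fun j _ => by ring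

lemma rankOne_smul {d : ℕ} (c : ℂ) (v : Fin d → ℂ) :
    rankOne (c • v) = (c * star c) • rankOne v := by
  ext a b
  simp [rankOne, Matrix.vecMulVec_apply]
  ring

lemma quad_smul {d : ℕ} (c : ℂ) (v : Fin d → ℂ) (ρ : Matrix (Fin d) (Fin d) ℂ) :
    star (c • v) ⬝ᵥ ρ *ᵥ (c • v) = (star c * c) * (star v ⬝ᵥ ρ *ᵥ v) := by
  rw [star_smul, smul_dotProduct, Matrix.mulVec_smul, dotProduct_smul]
  simp [mul_assoc]

/-- Reconstruction of a linear map from its Choi matrix. -/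
lemma choi_reconstruct {d : ℕ} (hd : 1 ≤ d)
    (Φ : Matrix (Fin d) (Fin d) ℂ →ₗ[ℂ] Matrix (Fin d) (Fin d) ℂ)
    (ρ : Matrix (Fin d) (Fin d) ℂ) (a b : Fin d) :
    Φ ρ a b = (d : ℂ) * ∑ i, ∑ j, ρ i j * choiMatrix (fun ρ => Φ ρ) (i, a) (j, b) := by
  have hd0 : (d : ℂ) ≠ 0 := Nat.cast_ne_zero.mpr (by omega)
  have hblock : ∀ i j, choiMatrix (fun ρ => Φ ρ) (i, a) (j, b)
      = (d : ℂ)⁻¹ * Φ (Matrix.single i j 1) a b := by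
    intro i j
    have h1 : @Eq (Matrix (Fin d) (Fin d) ℂ) (fun a' b' => maxEnt d (i, a') (j, b'))
        ((d : ℂ)⁻¹ • Matrix.single i j 1) := by
      ext a' b'
      rw [Matrix.smul_apply, Matrix.single, Matrix.of_apply]
      by_cases h : i = a' ∧ j = b' <;> simp [maxEnt, h, one_div]
    show Φ (fun a' b' => maxEnt d (i, a') (j, b')) a b = _
    rw [h1, _root_.map_smul]
    simp
  conv_lhs => rw [Matrix.matrix_eq_sum_single ρ]
  rw [map_sum, Matrix.sum_apply]
  rw [Finset.mul_sum]
  refine Finset.sum_congr rfl fun i _ => ?_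
  rw [map_sum, Matrix.sum_apply, Finset.mul_sum]
  refine Finset.sum_congr rfl fun j _ => ?_
  rw [hblock i j]
  have : Matrix.single i j (ρ i j) = ρ i j • Matrix.single i j 1 := by
    rw [Matrix.smul_single]; simp
  rw [this, _root_.map_smul]
  simp only [Matrix.smul_apply, smul_eq_mul]
  field_simp

/-- quadratic form computed on a standard basis matrix -/
lemma quad_stdBasis {d : ℕ} (v : Fin d → ℂ) (a b : Fin d) :
    star v ⬝ᵥ (Matrix.single b a 1) *ᵥ v = v a * star (v b) := by
  simp only [dotProduct, Matrix.mulVec, Pi.star_apply, dotProduct,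
    Matrix.single, Matrix.of_apply]
  rw [Finset.sum_eq_single b]
  · rw [Finset.sum_eq_single a] <;> simp +contextual [eq_comm]
    ring
  · intro c _ hc
    rw [Finset.sum_eq_zero] <;> simp +contextual [hc, Ne.symm hc]
  · simp

lemma trace_rankOne {d : ℕ} (v : Fin d → ℂ) :
    (rankOne v).trace = ((∑ x, Complex.normSq (v x) : ℝ) : ℂ) := by
  simp [Matrix.trace, Matrix.diag, rankOne, Matrix.vecMulVec_apply, Complex.mul_conj]

lemma sum_comm3 {A B C M : Type*} [Fintype A] [Fintype B] [Fintype C] [AddCommMonoid M]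
    (f : A → B → C → M) :
    ∑ i, ∑ j, ∑ k, f i j k = ∑ k, ∑ i, ∑ j, f i j k :=
  (Finset.sum_congr rfl fun _ _ => Finset.sum_comm).trans Finset.sum_comm

lemma tp_normalize {d : ℕ} (Φ : Matrix (Fin d) (Fin d) ℂ →ₗ[ℂ] Matrix (Fin d) (Fin d) ℂ)
    (N : ℕ) (ψ φ : Fin N → (Fin d → ℂ))
    (hform : ∀ ρ, Φ ρ = ∑ k, (star (φ k) ⬝ᵥ ρ *ᵥ φ k) • rankOne (ψ k))
    (hTP : TracePreserving (fun ρ => Φ ρ)) :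
    ∃ (ψ' φ' : Fin N → (Fin d → ℂ)),
      (∀ ρ, Φ ρ = ∑ k, (star (φ' k) ⬝ᵥ ρ *ᵥ φ' k) • rankOne (ψ' k)) ∧
      ∑ k, rankOne (φ' k) = 1 := by
  set s : Fin N → ℝ := fun k => ∑ x, Complex.normSq (ψ k x) with hs
  set r : Fin N → ℝ := fun k => Real.sqrt (s k) with hr
  have hs0 : ∀ k, 0 ≤ s k := fun k => Finset.sum_nonneg fun x _ => Complex.normSq_nonneg _
  have hr2 : ∀ k, (r k) * (r k) = s k := fun k => Real.mul_self_sqrt (hs0 k)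
  set φ' : Fin N → Fin d → ℂ := fun k => ((r k : ℝ) : ℂ) • φ k with hφ'
  set ψ' : Fin N → Fin d → ℂ := fun k => (((r k : ℝ) : ℂ))⁻¹ • ψ k with hψ'
  have hzero : ∀ k, r k = 0 → ψ k = 0 := by
    intro k hk
    have hsk : s k = 0 := by rw [← hr2 k, hk, mul_zero]
    funext x
    have := (Finset.sum_eq_zero_iff_of_nonneg
      (fun y (_ : y ∈ Finset.univ) => Complex.normSq_nonneg (ψ k y))).mp hsk x (Finset.mem_univ x)
    exact Complex.normSq_eq_zero.mp this
  have hterm : ∀ (ρ : Matrix (Fin d) (Fin d) ℂ) k,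
      (star (φ' k) ⬝ᵥ ρ *ᵥ φ' k) • rankOne (ψ' k)
        = (star (φ k) ⬝ᵥ ρ *ᵥ φ k) • rankOne (ψ k) := by
    intro ρ k
    have hstar : star ((r k : ℝ) : ℂ) = ((r k : ℝ) : ℂ) := Complex.conj_ofReal (r k)
    rw [hφ', hψ']
    simp only [quad_smul, rankOne_smul, smul_smul, star_inv₀, hstar]
    by_cases h : r k = 0
    · rw [hzero k h]
      have h0 : rankOne (0 : Fin d → ℂ) = 0 := by
        ext i j
        simp [rankOne_apply']
      rw [h0, smul_zero, smul_zero]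
    · have hrc : ((r k : ℝ) : ℂ) ≠ 0 := Complex.ofReal_ne_zero.mpr h
      congr 1
      field_simp
  have hform2 : ∀ ρ, Φ ρ = ∑ k, (star (φ' k) ⬝ᵥ ρ *ᵥ φ' k) • rankOne (ψ' k) := by
    intro ρ
    rw [hform ρ]
    exact (Finset.sum_congr rfl fun k _ => (hterm ρ k).symm)
  refine ⟨ψ', φ', hform2, ?_⟩
  have htr : ∀ ρ : Matrix (Fin d) (Fin d) ℂ,
      ∑ k, (star (φ' k) ⬝ᵥ ρ *ᵥ φ' k) = ρ.trace := by
    intro ρ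
    have h1 : (Φ ρ).trace = ρ.trace := hTP ρ
    rw [hform2 ρ, Matrix.trace_sum] at h1
    rw [← h1]
    refine Finset.sum_congr rfl fun k _ => ?_
    rw [Matrix.trace_smul, smul_eq_mul]
    by_cases h : r k = 0
    · have : φ' k = 0 := by
        show ((r k : ℝ) : ℂ) • φ k = 0
        rw [h]; simp
      simp [this]
    · have htr1 : (rankOne (ψ' k)).trace = 1 := by
        rw [trace_rankOne]
        have : ∀ x, Complex.normSq (ψ' k x) = (r k)⁻¹ * (r k)⁻¹ * Complex.normSq (ψ k x) := by
          intro x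
          rw [hψ']
          simp only [Pi.smul_apply, smul_eq_mul, ← Complex.ofReal_inv, Complex.normSq_mul,
            Complex.normSq_ofReal]
        rw [Finset.sum_congr rfl fun x _ => this x, ← Finset.mul_sum]
        have hsk : (∑ i, Complex.normSq (ψ k i)) = r k * r k := (hr2 k).symm
        rw [hsk]
        have h2 : (r k)⁻¹ * (r k)⁻¹ * (r k * r k) = 1 := by field_simp
        rw [h2, Complex.ofReal_one]
      rw [htr1, mul_one]
  ext a b
  have hkey := htr (Matrix.single b a 1)
  have htrE : (Matrix.single b a (1:ℂ)).trace = (1 : Matrix (Fin d) (Fin d) ℂ) a b := by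
    simp only [Matrix.trace, Matrix.diag, Matrix.single, Matrix.of_apply,
      Matrix.one_apply]
    by_cases hab : a = b
    · subst hab
      simp
    · rw [if_neg hab]
      refine Finset.sum_eq_zero fun x _ => ?_
      rw [if_neg]
      rintro ⟨rfl, rfl⟩
      exact hab rfl
  calc (∑ k, rankOne (φ' k)) a b
      = ∑ k, star (φ' k) ⬝ᵥ Matrix.single b a 1 *ᵥ φ' k := by
        rw [Matrix.sum_apply]
        exact Finset.sum_congr rfl fun k _ =>
          (rankOne_apply' (φ' k) a b).trans (quad_stdBasis (φ' k) a b).symm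
    _ = (Matrix.single b a (1:ℂ)).trace := hkey
    _ = (1 : Matrix (Fin d) (Fin d) ℂ) a b := htrE

/-- if the Choi matrix of `Φ` is separable then `Φ` has the rank-one
Kraus form (1.2); if moreover `Φ` is trace-preserving, the vectors can be chosen with
`∑ k |φ_k⟩⟨φ_k| = I` ((C) ⇒ (A),(D) of Theorem 2). -/
theorem choi_separable_implies_rank_one_form
    {d : ℕ} (hd : 1 ≤ d)
    (Φ : Matrix (Fin d) (Fin d) ℂ →ₗ[ℂ] Matrix (Fin d) (Fin d) ℂ)
    (hsep : IsSeparableMat (choiMatrix (fun ρ => Φ ρ))) :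
    (∃ (N : ℕ) (ψ φ : Fin N → (Fin d → ℂ)),
        ∀ ρ, Φ ρ = ∑ k, (star (φ k) ⬝ᵥ ρ *ᵥ φ k) • rankOne (ψ k)) ∧
    (TracePreserving (fun ρ => Φ ρ) →
      ∃ (N : ℕ) (ψ φ : Fin N → (Fin d → ℂ)),
        (∀ ρ, Φ ρ = ∑ k, (star (φ k) ⬝ᵥ ρ *ᵥ φ k) • rankOne (ψ k)) ∧
        ∑ k, rankOne (φ k) = 1) := by
  have part1 : ∃ (N : ℕ) (ψ φ : Fin N → (Fin d → ℂ)),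
      ∀ ρ, Φ ρ = ∑ k, (star (φ k) ⬝ᵥ ρ *ᵥ φ k) • rankOne (ψ k) := by
    obtain ⟨N, A, B, hA, hB, hC⟩ := hsep
    choose u hu using fun k => psd_sum_rankOne (hA k)
    choose w hw using fun k => psd_sum_rankOne (hB k)
    set sd : ℂ := ((Real.sqrt d : ℝ) : ℂ) with hsd
    have hsd2 : star sd * sd = (d : ℂ) := by
      simp [hsd, ← Complex.ofReal_mul, Real.mul_self_sqrt (by positivity : (0:ℝ) ≤ (d:ℝ))]
    set e := (Fintype.equivFin (Fin N × Fin d × Fin d)).symm with he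
    refine ⟨Fintype.card (Fin N × Fin d × Fin d),
      fun k' => w (e k').1 (e k').2.1,
      fun k' => sd • star (u (e k').1 (e k').2.2), ?_⟩
    intro ρ
    have hre := Equiv.sum_comp e
      (fun x : Fin N × Fin d × Fin d =>
        (star (sd • star (u x.1 x.2.2)) ⬝ᵥ ρ *ᵥ (sd • star (u x.1 x.2.2))) •
          rankOne (w x.1 x.2.1))
    rw [hre]
    ext a b
    rw [choi_reconstruct hd Φ ρ a b]
    have hchoi : ∀ i j, choiMatrix (fun ρ => Φ ρ) (i, a) (j, b) = ∑ k, A k i j * B k a b := by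
      intro i j
      rw [hC, Matrix.sum_apply]
      exact Finset.sum_congr rfl fun k _ => by simp [Matrix.kroneckerMap_apply]
    simp only [hchoi, Finset.mul_sum]
    rw [sum_comm3]
    rw [Matrix.sum_apply]
    simp only [Fintype.sum_prod_type]
    refine Finset.sum_congr rfl fun k _ => ?_
    simp only [Matrix.smul_apply, smul_eq_mul, quad_smul, hsd2]
    have h1 : (d:ℂ) * ((∑ i, ∑ j, ρ i j * A k i j) * B k a b)
        = ∑ i, ∑ j, (d:ℂ) * (ρ i j * (A k i j * B k a b)) := by
      simp only [Finset.mul_sum, Finset.sum_mul]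
      exact Finset.sum_congr rfl fun i _ => Finset.sum_congr rfl fun j _ => by ring
    rw [← h1]
    have h2 : (∑ i, ∑ j, ρ i j * A k i j)
        = ∑ m, star (star (u k m)) ⬝ᵥ ρ *ᵥ star (u k m) := by
      conv_lhs => rw [hu k]
      simp only [Matrix.sum_apply, Finset.mul_sum]
      rw [sum_comm3]
      exact Finset.sum_congr rfl fun m _ => quad_eq ρ (u k m)
    have h3 : B k a b = ∑ l, rankOne (w k l) a b := by rw [hw k, Matrix.sum_apply]
    rw [h2, h3]
    rw [Finset.sum_mul_sum, Finset.mul_sum]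
    simp only [Finset.mul_sum]
    rw [Finset.sum_comm]
    exact Finset.sum_congr rfl fun l _ => Finset.sum_congr rfl fun m _ => by ring
  refine ⟨part1, fun hTP => ?_⟩
  obtain ⟨N, ψ, φ, hform⟩ := part1
  obtain ⟨ψ', φ', h1, h2⟩ := tp_normalize Φ N ψ φ hform hTP
  exact ⟨N, ψ', φ', h1, h2⟩
end
end

section
/- A linear map Φ on d×d complex matrices is entanglement breaking if and only if there exist a finite family of density matrices R_k and positive semidefinite d×d matrices F_k such that Φ(ρ) = Σ_k R_k · Tr(F_k ρ) for all ρ (the Holevo form). Moreover, if Φ is entanglement breaking and trace-preserving, then the F_k can be chosen to satisfy Σ_k F_k = I (a POVM); conversely, if Σ_k F_k = I then Φ is trace-preserving. (Theorem 1.) -/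
open Matrix Kronecker BigOperators ComplexOrder

noncomputable section

namespace EBAux

set_option maxHeartbeats 1000000
set_option linter.unusedSectionVars false

variable {m : Type*} [Fintype m] [DecidableEq m]

lemma star_of_nonneg {c : ℂ} (hc : 0 ≤ c) : star c = c := by
  rw [Complex.star_def, Complex.conj_eq_iff_im]
  exact (Complex.nonneg_iff.mp hc).2.symm

lemma psd_smul {M : Matrix m m ℂ} (hM : M.PosSemidef) {c : ℂ} (hc : 0 ≤ c) :
    (c • M).PosSemidef := by
  refine posSemidef_iff_dotProduct_mulVec.mpr ⟨?_, ?_⟩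
  · show (c • M)ᴴ = c • M
    rw [conjTranspose_smul, star_of_nonneg hc, hM.1]
  · intro x
    simpa [smul_mulVec, dotProduct_smul] using mul_nonneg hc (hM.dotProduct_mulVec_nonneg x)

lemma psd_vecMulVec (v : m → ℂ) : (vecMulVec v (star v)).PosSemidef := by
  have h : vecMulVec v (star v) = (replicateRow Unit (star v))ᴴ * replicateRow Unit (star v) := by
    rw [vecMulVec_eq Unit]
    congr 1
    ext i j
    simp [replicateCol, replicateRow, conjTranspose_apply]
  rw [h]; exact posSemidef_conjTranspose_mul_self _

lemma trace_conjTranspose_mul_self (B : Matrix m m ℂ) :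
    (Bᴴ * B).trace = ((∑ j, ∑ i, Complex.normSq (B i j) : ℝ) : ℂ) := by
  simp only [Matrix.trace, Matrix.diag, Matrix.mul_apply, conjTranspose_apply]
  push_cast
  refine Finset.sum_congr rfl fun j _ => Finset.sum_congr rfl fun i _ => ?_
  rw [Complex.star_def, Complex.normSq_eq_conj_mul_self]

lemma posSemidef_iff_eq_transpose_mul_self {M : Matrix m m ℂ} :
    M.PosSemidef ↔ ∃ B : Matrix m m ℂ, M = Bᴴ * B := by
  constructor
  · intro h
    open scoped MatrixOrder in
    obtain ⟨B, hB⟩ := CStarAlgebra.nonneg_iff_eq_star_mul_self.mp h.nonneg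
    exact ⟨B, hB⟩
  · rintro ⟨B, rfl⟩
    exact posSemidef_conjTranspose_mul_self B

lemma psd_trace_nonneg {M : Matrix m m ℂ} (hM : M.PosSemidef) : 0 ≤ M.trace := by
  obtain ⟨B, rfl⟩ := posSemidef_iff_eq_transpose_mul_self.mp hM
  rw [trace_conjTranspose_mul_self]
  rw [Complex.zero_le_real]
  exact Finset.sum_nonneg fun j _ => Finset.sum_nonneg fun i _ => Complex.normSq_nonneg _

lemma psd_trace_eq_zero {M : Matrix m m ℂ} (hM : M.PosSemidef) (h : M.trace = 0) :
    M = 0 := by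
  obtain ⟨B, rfl⟩ := posSemidef_iff_eq_transpose_mul_self.mp hM
  rw [trace_conjTranspose_mul_self, Complex.ofReal_eq_zero] at h
  have hB : B = 0 := by
    ext i j
    have h1 : ∀ j ∈ Finset.univ, (0:ℝ) ≤ ∑ i, Complex.normSq (B i j) := by
      intro j _; exact Finset.sum_nonneg fun i _ => Complex.normSq_nonneg _
    have h2 := (Finset.sum_eq_zero_iff_of_nonneg h1).mp h j (Finset.mem_univ j)
    have h3 : ∀ i ∈ Finset.univ, (0:ℝ) ≤ Complex.normSq (B i j) := by
      intro i _; exact Complex.normSq_nonneg _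
    have h4 := (Finset.sum_eq_zero_iff_of_nonneg h3).mp h2 i (Finset.mem_univ i)
    simpa using Complex.normSq_eq_zero.mp h4
  rw [hB]; simp

lemma trace_mul_eq (M ρ : Matrix m m ℂ) : (M * ρ).trace = ∑ i, ∑ j, M i j * ρ j i := by
  simp [Matrix.trace, Matrix.diag, Matrix.mul_apply]

lemma eq_of_forall_trace_mul_eq (M N : Matrix m m ℂ)
    (h : ∀ ρ, (M * ρ).trace = (N * ρ).trace) : M = N := by
  ext i j
  have := h (Matrix.single j i 1)
  rw [trace_mul_eq, trace_mul_eq] at this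
  simpa [Matrix.single, ite_and, Finset.sum_ite_eq, Finset.sum_ite_eq'] using this

lemma psd_partial_trace {n d : ℕ} {Γ : Matrix (Fin n × Fin d) (Fin n × Fin d) ℂ}
    (h : Γ.PosSemidef) :
    (Matrix.of fun i j => ∑ a, Γ (i,a) (j,a) : Matrix (Fin n) (Fin n) ℂ).PosSemidef := by
  refine posSemidef_iff_dotProduct_mulVec.mpr ⟨?_, ?_⟩
  · ext i j
    simp only [conjTranspose_apply, Matrix.of_apply, star_sum]
    exact Finset.sum_congr rfl fun a _ => h.1.apply (i,a) (j,a)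
  · intro x
    have hterm : ∀ a : Fin d,
        star (fun p : Fin n × Fin d => if p.2 = a then x p.1 else 0) ⬝ᵥ
          Γ *ᵥ (fun p : Fin n × Fin d => if p.2 = a then x p.1 else 0)
        = ∑ i, ∑ j, star (x i) * Γ (i,a) (j,a) * x j := by
      intro a
      simp only [dotProduct, mulVec, Pi.star_apply, Fintype.sum_prod_type,
        apply_ite (star : ℂ → ℂ), star_zero, ite_mul, mul_ite, zero_mul, mul_zero,
        Finset.sum_ite_eq', Finset.mem_univ, if_true]
      exact Finset.sum_congr rfl fun i _ => by
        rw [Finset.mul_sum]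
        exact Finset.sum_congr rfl fun j _ => by ring
    have key : star x ⬝ᵥ (Matrix.of fun i j => ∑ a, Γ (i,a) (j,a)) *ᵥ x
        = ∑ a : Fin d, ∑ i, ∑ j, star (x i) * Γ (i,a) (j,a) * x j := by
      simp only [dotProduct, mulVec, Matrix.of_apply, Pi.star_apply]
      have h1 : ∀ i, star (x i) * ∑ j, (∑ a, Γ (i,a) (j,a)) * x j
          = ∑ j, ∑ a : Fin d, star (x i) * Γ (i,a) (j,a) * x j := by
        intro i
        rw [Finset.mul_sum]
        refine Finset.sum_congr rfl fun j _ => ?_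
        rw [Finset.sum_mul, Finset.mul_sum]
        exact Finset.sum_congr rfl fun a _ => by ring
      calc (∑ i, star (x i) * ∑ j, (∑ a, Γ (i,a) (j,a)) * x j)
          = ∑ i, ∑ j, ∑ a : Fin d, star (x i) * Γ (i,a) (j,a) * x j :=
            Finset.sum_congr rfl fun i _ => h1 i
        _ = ∑ i, ∑ a : Fin d, ∑ j, star (x i) * Γ (i,a) (j,a) * x j :=
            Finset.sum_congr rfl fun i _ => Finset.sum_comm
        _ = ∑ a : Fin d, ∑ i, ∑ j, star (x i) * Γ (i,a) (j,a) * x j :=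
            Finset.sum_comm
    rw [key]
    refine Finset.sum_nonneg fun a _ => ?_
    rw [← hterm a]
    exact h.dotProduct_mulVec_nonneg _

lemma kron_conj_entry {n d : ℕ} (C : Matrix (Fin d) (Fin d) ℂ)
    (Γ : Matrix (Fin n × Fin d) (Fin n × Fin d) ℂ) (i j : Fin n) (a b : Fin d) :
    (((1 : Matrix (Fin n) (Fin n) ℂ) ⊗ₖ C) * Γ * ((1 : Matrix (Fin n) (Fin n) ℂ) ⊗ₖ C)ᴴ) (i,a) (j,b)
      = ∑ e, ∑ c, C a c * Γ (i,c) (j,e) * star (C b e) := by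
  simp only [Matrix.mul_apply, conjTranspose_apply, kroneckerMap_apply, one_apply,
    Fintype.sum_prod_type, ite_mul, one_mul, zero_mul, mul_ite, mul_zero,
    apply_ite (star : ℂ → ℂ), star_zero, star_one, star_mul',
    Finset.sum_ite_eq, Finset.sum_ite_eq', Finset.mem_univ, if_true,
    Finset.sum_ite_irrel, Finset.sum_const_zero]
  refine Finset.sum_congr rfl fun e _ => ?_
  rw [Finset.sum_mul]

lemma psd_trace_block {n d : ℕ} {F : Matrix (Fin d) (Fin d) ℂ}
    {Γ : Matrix (Fin n × Fin d) (Fin n × Fin d) ℂ}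
    (hF : F.PosSemidef) (hΓ : Γ.PosSemidef) :
    (Matrix.of fun i j => (F * Matrix.of (fun a b => Γ (i,a) (j,b))).trace
      : Matrix (Fin n) (Fin n) ℂ).PosSemidef := by
  obtain ⟨C, rfl⟩ := posSemidef_iff_eq_transpose_mul_self.mp hF
  have key : (Matrix.of fun i j => ((Cᴴ * C) * Matrix.of (fun a b => Γ (i,a) (j,b))).trace
        : Matrix (Fin n) (Fin n) ℂ)
      = Matrix.of fun i j => ∑ a, (((1 : Matrix (Fin n) (Fin n) ℂ) ⊗ₖ C) * Γ *
          ((1 : Matrix (Fin n) (Fin n) ℂ) ⊗ₖ C)ᴴ) (i,a) (j,a) := by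
    ext i j
    simp only [Matrix.of_apply]
    rw [trace_mul_eq]
    have hL : ∀ c e : Fin d, (Cᴴ * C) c e * (Matrix.of (fun a b => Γ (i,a) (j,b))) e c
        = ∑ a, star (C a c) * C a e * Γ (i,e) (j,c) := by
      intro c e
      rw [Matrix.mul_apply, Finset.sum_mul]
      exact Finset.sum_congr rfl fun a _ => by simp [conjTranspose_apply]
    calc (∑ c, ∑ e, (Cᴴ * C) c e * (Matrix.of (fun a b => Γ (i,a) (j,b))) e c)
        = ∑ c, ∑ e, ∑ a, star (C a c) * C a e * Γ (i,e) (j,c) :=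
          Finset.sum_congr rfl fun c _ => Finset.sum_congr rfl fun e _ => hL c e
      _ = ∑ c, ∑ a, ∑ e, star (C a c) * C a e * Γ (i,e) (j,c) :=
          Finset.sum_congr rfl fun c _ => Finset.sum_comm
      _ = ∑ a, ∑ c, ∑ e, star (C a c) * C a e * Γ (i,e) (j,c) := Finset.sum_comm
      _ = ∑ a, ∑ e, ∑ c, star (C a c) * C a e * Γ (i,e) (j,c) :=
          Finset.sum_congr rfl fun a _ => Finset.sum_comm
      _ = ∑ a, (((1 : Matrix (Fin n) (Fin n) ℂ) ⊗ₖ C) * Γ *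
          ((1 : Matrix (Fin n) (Fin n) ℂ) ⊗ₖ C)ᴴ) (i,a) (j,a) := by
          refine Finset.sum_congr rfl fun a _ => ?_
          rw [kron_conj_entry, Finset.sum_comm]
          exact Finset.sum_congr rfl fun e _ => Finset.sum_congr rfl fun c _ => by ring
  rw [key]
  exact psd_partial_trace (hΓ.mul_mul_conjTranspose_same _)

end EBAux


namespace EBAux

lemma inv_nonneg_c {z : ℂ} (h : 0 ≤ z) : 0 ≤ z⁻¹ := by
  obtain ⟨hre, him⟩ := Complex.nonneg_iff.mp h
  have hz : z = (z.re : ℂ) := Complex.ext rfl him.symm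
  rw [hz, ← Complex.ofReal_inv, Complex.zero_le_real]
  exact inv_nonneg.mpr hre

lemma natCast_nonneg_c (d : ℕ) : (0:ℂ) ≤ (d:ℂ) := by
  rw [show ((d:ℂ)) = ((d:ℝ):ℂ) by push_cast; ring, Complex.zero_le_real]
  exact Nat.cast_nonneg d

end EBAux

/-- Holevo form implies entanglement breaking. -/
lemma EB_of_holevo {d : ℕ} (Φ : Matrix (Fin d) (Fin d) ℂ →ₗ[ℂ] Matrix (Fin d) (Fin d) ℂ)
    (N : ℕ) (R F : Fin N → Matrix (Fin d) (Fin d) ℂ)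
    (hR : ∀ k, (R k).PosSemidef ∧ (R k).trace = 1)
    (hF : ∀ k, (F k).PosSemidef)
    (hform : ∀ ρ, Φ ρ = ∑ k, ((F k * ρ).trace) • R k) :
    EntBreaking (fun ρ => Φ ρ) := by
  intro n hn Γ hΓ
  refine ⟨N, fun k => Matrix.of fun i j => (F k * Matrix.of (fun a b => Γ (i,a) (j,b))).trace,
    R, fun k => EBAux.psd_trace_block (hF k) hΓ, fun k => (hR k).1, ?_⟩
  ext ⟨i,a⟩ ⟨j,b⟩
  show Φ (fun a' b' => Γ (i,a') (j,b')) a b = _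
  have := hform (Matrix.of fun a' b' => Γ (i,a') (j,b'))
  rw [show (fun a' b' => Γ (i,a') (j,b')) = (Matrix.of fun a' b' => Γ (i,a') (j,b') :
    Matrix (Fin d) (Fin d) ℂ) from rfl, this]
  simp [Matrix.sum_apply, kroneckerMap_apply]

/-- Entanglement breaking implies Holevo form. -/
lemma holevo_of_EB {d : ℕ} (Φ : Matrix (Fin d) (Fin d) ℂ →ₗ[ℂ] Matrix (Fin d) (Fin d) ℂ)
    (hEB : EntBreaking (fun ρ => Φ ρ)) :
    ∃ (N : ℕ) (R F : Fin N → Matrix (Fin d) (Fin d) ℂ),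
      (∀ k, (R k).PosSemidef ∧ (R k).trace = 1) ∧
      (∀ k, (F k).PosSemidef) ∧
      ∀ ρ, Φ ρ = ∑ k, ((F k * ρ).trace) • R k := by
  by_cases hd : d = 0
  · subst hd
    refine ⟨0, fun k => k.elim0, fun k => k.elim0, fun k => k.elim0, fun k => k.elim0, ?_⟩
    intro ρ
    ext i j
    exact i.elim0
  have hd1 : 1 ≤ d := Nat.one_le_iff_ne_zero.mpr hd
  have hdC : (d:ℂ) ≠ 0 := Nat.cast_ne_zero.mpr hd
  -- the maximally entangled state is PSD
  set v : Fin d × Fin d → ℂ := fun p => if p.1 = p.2 then (((Real.sqrt d)⁻¹ : ℝ) : ℂ) else 0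
    with hv
  have hvv : maxEnt d = vecMulVec v (star v) := by
    ext p q
    simp only [maxEnt, vecMulVec_apply, Pi.star_apply, hv]
    by_cases h1 : p.1 = p.2 <;> by_cases h2 : q.1 = q.2 <;>
      simp [h1, h2, Complex.conj_ofReal]
    rw [← mul_inv, ← Complex.ofReal_mul, Real.mul_self_sqrt (by positivity)]
    push_cast
    ring
  have hps : (maxEnt d).PosSemidef := by
    rw [hvv]; exact EBAux.psd_vecMulVec v
  obtain ⟨N, A, B, hA, hB, hEq⟩ := hEB d hd1 (maxEnt d) hps
  -- recover Φ on matrix units from the separable decomposition of the Choi matrix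
  have h1 : ∀ (i j : Fin d) (a b : Fin d),
      Φ (Matrix.single i j 1) a b = ∑ k, (d:ℂ) * (A k i j * B k a b) := by
    intro i j a b
    have e1 : tensorId d (fun ρ => Φ ρ) (maxEnt d) (i,a) (j,b)
        = (∑ k, A k ⊗ₖ B k) (i,a) (j,b) := by rw [hEq]
    have e2 : tensorId d (fun ρ => Φ ρ) (maxEnt d) (i,a) (j,b)
        = (d:ℂ)⁻¹ * Φ (Matrix.single i j 1) a b := by
      show Φ (fun a' b' => maxEnt d (i,a') (j,b')) a b = _
      have hbl : (fun a' b' => maxEnt d (i,a') (j,b'))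
          = ((d:ℂ)⁻¹ • Matrix.single i j 1 : Matrix (Fin d) (Fin d) ℂ) := by
        funext a' b'
        simp only [maxEnt, Matrix.smul_apply, Matrix.single, Matrix.of_apply,
          smul_eq_mul]
        by_cases h3 : i = a' ∧ j = b'
        · simp [h3.1, h3.2, one_div]
        · simp [h3]
      rw [hbl, _root_.map_smul]
      simp
    have e3 : (∑ k, A k ⊗ₖ B k) (i,a) (j,b) = ∑ k, A k i j * B k a b := by
      simp [Matrix.sum_apply, kroneckerMap_apply]
    have e0 : (d:ℂ)⁻¹ * Φ (Matrix.single i j 1) a b = ∑ k, A k i j * B k a b := by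
      rw [← e2, e1, e3]
    calc Φ (Matrix.single i j 1) a b
        = (d:ℂ) * ((d:ℂ)⁻¹ * Φ (Matrix.single i j 1) a b) := by field_simp
      _ = (d:ℂ) * ∑ k, A k i j * B k a b := by rw [e0]
      _ = ∑ k, (d:ℂ) * (A k i j * B k a b) := by rw [Finset.mul_sum]
  -- define the Holevo decomposition
  refine ⟨N,
    fun k => if (B k).trace = 0 then ((d:ℂ)⁻¹ • 1) else ((B k).trace)⁻¹ • B k,
    fun k => if (B k).trace = 0 then 0 else ((B k).trace * d) • (A k)ᵀ,
    ?_, ?_, ?_⟩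
  · intro k
    by_cases h : (B k).trace = 0
    · simp only [h, if_true]
      constructor
      · exact EBAux.psd_smul Matrix.PosSemidef.one (EBAux.inv_nonneg_c (EBAux.natCast_nonneg_c d))
      · rw [Matrix.trace_smul, Matrix.trace_one]
        simp [Fintype.card_fin, inv_mul_cancel₀ hdC]
    · simp only [h, if_false]
      constructor
      · exact EBAux.psd_smul (hB k) (EBAux.inv_nonneg_c (EBAux.psd_trace_nonneg (hB k)))
      · rw [Matrix.trace_smul]
        simp [inv_mul_cancel₀ h]
  · intro k
    by_cases h : (B k).trace = 0
    · simp only [h, if_true]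
      exact Matrix.PosSemidef.zero
    · simp only [h, if_false]
      exact EBAux.psd_smul (hA k).transpose
        (mul_nonneg (EBAux.psd_trace_nonneg (hB k)) (EBAux.natCast_nonneg_c d))
  · intro ρ
    have stepA : ∀ k, ((if (B k).trace = 0 then 0 else ((B k).trace * d) • (A k)ᵀ) * ρ).trace
          • (if (B k).trace = 0 then ((d:ℂ)⁻¹ • (1 : Matrix (Fin d) (Fin d) ℂ))
              else ((B k).trace)⁻¹ • B k)
        = ((d:ℂ) * ((A k)ᵀ * ρ).trace) • B k := by
      intro k
      by_cases h : (B k).trace = 0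
      · have hBk : B k = 0 := EBAux.psd_trace_eq_zero (hB k) h
        simp [h, hBk]
      · simp only [h, if_false, Matrix.smul_mul, Matrix.trace_smul, smul_smul,
          smul_eq_mul]
        congr 1
        field_simp
    rw [Finset.sum_congr rfl fun k _ => stepA k]
    -- main computation
    ext a b
    have hrep : ρ = ∑ i, ∑ j, Matrix.single i j (ρ i j) := matrix_eq_sum_single ρ
    have hsmul : ∀ (i j : Fin d), Matrix.single i j (ρ i j)
        = (ρ i j) • Matrix.single i j (1:ℂ) := by
      intro i j
      rw [smul_single]
      rw [smul_eq_mul, mul_one]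
    have hlin : Φ ρ = ∑ i, ∑ j, (ρ i j) • Φ (Matrix.single i j 1) := by
      conv_lhs => rw [hrep]
      rw [map_sum]
      refine Finset.sum_congr rfl fun i _ => ?_
      rw [map_sum]
      refine Finset.sum_congr rfl fun j _ => ?_
      rw [hsmul i j, _root_.map_smul]
    calc Φ ρ a b
        = (∑ i, ∑ j, (ρ i j) • Φ (Matrix.single i j 1)) a b := by rw [hlin]
      _ = ∑ i, ∑ j, (ρ i j) * Φ (Matrix.single i j 1) a b := by
          simp [Matrix.sum_apply]
      _ = ∑ i, ∑ j, ∑ k, (ρ i j) * ((d:ℂ) * (A k i j * B k a b)) := by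
          refine Finset.sum_congr rfl fun i _ => Finset.sum_congr rfl fun j _ => ?_
          rw [h1 i j a b, Finset.mul_sum]
      _ = ∑ i, ∑ k, ∑ j, (ρ i j) * ((d:ℂ) * (A k i j * B k a b)) :=
          Finset.sum_congr rfl fun i _ => Finset.sum_comm
      _ = ∑ k, ∑ i, ∑ j, (ρ i j) * ((d:ℂ) * (A k i j * B k a b)) := Finset.sum_comm
      _ = ∑ k, ((d:ℂ) * ((A k)ᵀ * ρ).trace) * B k a b := by
          refine Finset.sum_congr rfl fun k _ => ?_
          rw [EBAux.trace_mul_eq]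
          rw [Finset.mul_sum, Finset.sum_mul]
          rw [Finset.sum_comm]
          refine Finset.sum_congr rfl fun i _ => ?_
          rw [Finset.mul_sum, Finset.sum_mul]
          refine Finset.sum_congr rfl fun j _ => ?_
          simp only [Matrix.transpose_apply]
          ring
      _ = (∑ k, ((d:ℂ) * ((A k)ᵀ * ρ).trace) • B k) a b := by
          simp [Matrix.sum_apply]

/-- Theorem 1: a linear map is entanglement breaking iff it has the
Holevo form; for entanglement-breaking trace-preserving maps the `F_k` can be chosen
to form a POVM, and conversely `∑ k F_k = I` forces trace preservation. -/
theorem entanglement_breaking_iff_holevo_form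
    {d : ℕ} (Φ : Matrix (Fin d) (Fin d) ℂ →ₗ[ℂ] Matrix (Fin d) (Fin d) ℂ) :
    (EntBreaking (fun ρ => Φ ρ) ↔
      ∃ (N : ℕ) (R F : Fin N → Matrix (Fin d) (Fin d) ℂ),
        (∀ k, (R k).PosSemidef ∧ (R k).trace = 1) ∧
        (∀ k, (F k).PosSemidef) ∧
        ∀ ρ, Φ ρ = ∑ k, ((F k * ρ).trace) • R k) ∧
    (EntBreaking (fun ρ => Φ ρ) → TracePreserving (fun ρ => Φ ρ) →
      ∃ (N : ℕ) (R F : Fin N → Matrix (Fin d) (Fin d) ℂ),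
        (∀ k, (R k).PosSemidef ∧ (R k).trace = 1) ∧
        (∀ k, (F k).PosSemidef) ∧
        (∑ k, F k) = 1 ∧
        ∀ ρ, Φ ρ = ∑ k, ((F k * ρ).trace) • R k) ∧
    (∀ (N : ℕ) (R F : Fin N → Matrix (Fin d) (Fin d) ℂ),
        (∀ k, (R k).PosSemidef ∧ (R k).trace = 1) →
        (∀ k, (F k).PosSemidef) →
        (∑ k, F k) = 1 →
        (∀ ρ, Φ ρ = ∑ k, ((F k * ρ).trace) • R k) →
        TracePreserving (fun ρ => Φ ρ)) := by
  refine ⟨⟨fun hEB => holevo_of_EB Φ hEB, ?_⟩, ?_, ?_⟩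
  · rintro ⟨N, R, F, hR, hF, hform⟩
    exact EB_of_holevo Φ N R F hR hF hform
  · intro hEB hTP
    obtain ⟨N, R, F, hR, hF, hform⟩ := holevo_of_EB Φ hEB
    refine ⟨N, R, F, hR, hF, ?_, hform⟩
    apply EBAux.eq_of_forall_trace_mul_eq
    intro ρ
    have hQ : ∑ k, (F k * ρ).trace = ρ.trace := by
      have h := hTP ρ
      simp only at h
      rw [hform ρ, Matrix.trace_sum] at h
      simpa [Matrix.trace_smul, (hR _).2] using h
    rw [Finset.sum_mul, Matrix.trace_sum, one_mul, hQ]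
  · intro N R F hR hF hsum hform X
    show (Φ X).trace = X.trace
    rw [hform X, Matrix.trace_sum]
    have : ∀ k, ((F k * X).trace • R k).trace = (F k * X).trace := by
      intro k
      rw [Matrix.trace_smul, (hR k).2, smul_eq_mul, mul_one]
    rw [Finset.sum_congr rfl fun k _ => this k]
    rw [← Matrix.trace_sum, ← Finset.sum_mul, hsum, one_mul]
end
end

section
/- A linear map Φ on d×d complex matrices is entanglement breaking if and only if for every m ≥ 1 and every positivity-preserving linear map Υ from d×d complex matrices to m×m complex matrices, the composition Υ ∘ Φ is completely positive. (Equivalence (B) ⇔ (E) of Theorem 2.) -/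
open Matrix Kronecker BigOperators ComplexOrder

noncomputable section

open scoped MatrixOrder in
lemma psd_eq_conjTranspose_mul_self' {κ : Type*} [Fintype κ] [DecidableEq κ]
    {B : Matrix κ κ ℂ} (hB : B.PosSemidef) : ∃ C : Matrix κ κ ℂ, B = Cᴴ * C := by
  obtain ⟨C, hC⟩ := CStarAlgebra.nonneg_iff_eq_star_mul_self.mp hB.nonneg
  exact ⟨C, hC⟩

namespace EBaux

attribute [local instance] Matrix.normedAddCommGroup Matrix.normedSpace

variable {ι : Type*} [Fintype ι] [DecidableEq ι]

lemma star_single (i : ι) (a : ℂ) : star (Pi.single i a : ι → ℂ) = Pi.single i (star a) := by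
  ext p
  rcases eq_or_ne p i with rfl | h
  · simp
  · simp [Pi.single_eq_of_ne h]

lemma quad_single (M : Matrix ι ι ℂ) (i : ι) :
    dotProduct (star (Pi.single i 1)) (M *ᵥ (Pi.single i 1)) = M i i := by
  rw [star_single, star_one, Matrix.mulVec_single, single_dotProduct]
  simp

lemma psd_diag_nonneg {M : Matrix ι ι ℂ} (hM : M.PosSemidef) (i : ι) : 0 ≤ M i i := by
  have := hM.dotProduct_mulVec_nonneg (Pi.single i 1)
  rwa [quad_single] at this

lemma psd_diag_eq_re {M : Matrix ι ι ℂ} (hM : M.PosSemidef) (i : ι) :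
    M i i = ((M i i).re : ℂ) := by
  have := (Complex.nonneg_iff.mp (psd_diag_nonneg hM i)).2
  exact Complex.ext rfl this.symm

lemma herm_conj_entry {M : Matrix ι ι ℂ} (hM : M.IsHermitian) (i j : ι) :
    (starRingEnd ℂ) (M i j) = M j i := by
  have := congrFun (congrFun hM.symm j) i
  simpa [Matrix.conjTranspose_apply] using this.symm

lemma psd_entry_bound {M : Matrix ι ι ℂ} (hM : M.PosSemidef) (i j : ι) :
    ‖M i j‖ ≤ (M i i).re + (M j j).re := by
  rcases eq_or_ne i j with rfl | hij
  · rw [psd_diag_eq_re hM i]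
    simp only [Complex.norm_real, Real.norm_eq_abs, Complex.ofReal_re]
    have h0 : 0 ≤ (M i i).re := (Complex.nonneg_iff.mp (psd_diag_nonneg hM i)).1
    rw [abs_of_nonneg h0]
    linarith
  rcases eq_or_ne (M i j) 0 with h0 | h0
  · simp only [h0, norm_zero]
    have := (Complex.nonneg_iff.mp (psd_diag_nonneg hM i)).1
    have := (Complex.nonneg_iff.mp (psd_diag_nonneg hM j)).1
    linarith
  · set a : ℝ := ‖M i j‖ with ha
    have hapos : 0 < a := by simpa [ha] using (norm_pos_iff.mpr h0)
    set c : ℂ := -(starRingEnd ℂ) (M i j) / a with hc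
    set x : ι → ℂ := Pi.single i 1 + Pi.single j c with hx
    have hane : (a:ℂ) ≠ 0 := by exact_mod_cast hapos.ne'
    have key : dotProduct (star x) (M *ᵥ x) =
        M i i + M j j * (c * (starRingEnd ℂ) c) + (M i j * c + (starRingEnd ℂ) (M i j * c)) := by
      rw [hx, star_add, Matrix.mulVec_add, star_single, star_single, star_one]
      simp only [add_dotProduct, dotProduct_add, Matrix.mulVec_single,
        single_dotProduct, Pi.smul_apply, Matrix.col_apply, op_smul_eq_mul]
      have hji : M j i = (starRingEnd ℂ) (M i j) := (herm_conj_entry hM.1 i j).symm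
      rw [hji, hc]
      simp only [Complex.star_def, _root_.map_mul, map_neg, map_div₀, map_inv₀, Complex.conj_conj,
        Complex.conj_ofReal]
      ring
    have habs1 : c * (starRingEnd ℂ) c = 1 := by
      have h1 : ‖c‖ = 1 := by
        rw [hc, norm_div, norm_neg, Complex.norm_conj, Complex.norm_real, Real.norm_eq_abs,
          abs_of_pos hapos, ← ha, div_self hapos.ne']
      rw [Complex.mul_conj, Complex.normSq_eq_norm_sq, h1]
      norm_num
    have h1 : M i j * (starRingEnd ℂ) (M i j) = (a:ℂ)^2 := by
      rw [Complex.mul_conj, Complex.normSq_eq_norm_sq, ha]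
      push_cast
      ring
    have hMc : M i j * c = -(a : ℂ) := by
      have h2 : M i j * (-(starRingEnd ℂ) (M i j) / (a:ℂ)) =
          -((M i j * (starRingEnd ℂ) (M i j)) / a) := by ring
      rw [hc, h2, h1, sq, mul_div_assoc, div_self hane, mul_one]
    have h := hM.dotProduct_mulVec_nonneg x
    rw [key, habs1, hMc] at h
    have hre := (Complex.nonneg_iff.mp h).1
    simp only [Complex.add_re, Complex.mul_re, Complex.one_re, Complex.one_im, Complex.neg_re,
      Complex.ofReal_re, map_neg, Complex.conj_ofReal, Complex.neg_im,
      Complex.ofReal_im] at hre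
    linarith [hre, hapos]


lemma psd_trace_re_eq {M : Matrix ι ι ℂ} (hM : M.PosSemidef) :
    M.trace = (M.trace.re : ℂ) := by
  rw [Matrix.trace]
  rw [Complex.re_sum]
  push_cast
  exact Finset.sum_congr rfl fun i _ => psd_diag_eq_re hM i

lemma psd_diag_re_le_trace {M : Matrix ι ι ℂ} (hM : M.PosSemidef) (i : ι) :
    (M i i).re ≤ M.trace.re := by
  rw [Matrix.trace, Complex.re_sum]
  exact Finset.single_le_sum
    (fun j _ => (Complex.nonneg_iff.mp (psd_diag_nonneg hM j)).1) (Finset.mem_univ i)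

lemma psd_trace_re_nonneg {M : Matrix ι ι ℂ} (hM : M.PosSemidef) : 0 ≤ M.trace.re := by
  rw [Matrix.trace, Complex.re_sum]
  exact Finset.sum_nonneg fun j _ => (Complex.nonneg_iff.mp (psd_diag_nonneg hM j)).1

lemma psd_trace_zero_eq_zero {M : Matrix ι ι ℂ} (hM : M.PosSemidef)
    (h : M.trace = 0) : M = 0 := by
  have hdiag : ∀ i, (M i i).re = 0 := by
    intro i
    have hsum : ∑ j, (M j j).re = 0 := by
      have := congrArg Complex.re h
      rwa [Matrix.trace, Complex.re_sum] at this
    have := (Finset.sum_eq_zero_iff_of_nonneg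
      (fun j _ => (Complex.nonneg_iff.mp (psd_diag_nonneg hM j)).1)).mp hsum
    exact this i (Finset.mem_univ i)
  ext i j
  have hb := psd_entry_bound hM i j
  rw [hdiag i, hdiag j] at hb
  simp only [add_zero] at hb
  have : ‖M i j‖ = 0 := le_antisymm (by simpa using hb) (by positivity)
  simpa using this

/-- smul of PSD by nonneg real (as complex scalar). -/
lemma psd_smul_real {M : Matrix ι ι ℂ} (hM : M.PosSemidef) {t : ℝ} (ht : 0 ≤ t) :
    ((t : ℂ) • M).PosSemidef := by
  refine Matrix.PosSemidef.of_dotProduct_mulVec_nonneg ?_ ?_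
  · have := hM.1
    rw [Matrix.IsHermitian, Matrix.conjTranspose_smul, this]
    congr 1
    simp [Complex.star_def, Complex.conj_ofReal]
  · intro x
    rw [Matrix.smul_mulVec, dotProduct_smul, smul_eq_mul]
    exact mul_nonneg (by exact_mod_cast Complex.zero_le_real.mpr ht) (hM.dotProduct_mulVec_nonneg x)

lemma psd_sum {N : ℕ} (f : Fin N → Matrix ι ι ℂ) (hf : ∀ i, (f i).PosSemidef) :
    (∑ i, f i).PosSemidef :=
  Finset.sum_induction f _ (fun _ _ ha hb => ha.add hb) Matrix.PosSemidef.zero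
    (fun i _ => hf i)

lemma kron_conjTranspose {κ : Type*} (A : Matrix ι ι ℂ) (B : Matrix κ κ ℂ) :
    (A ⊗ₖ B)ᴴ = Aᴴ ⊗ₖ Bᴴ := by
  ext p q
  simp [Matrix.conjTranspose_apply, Matrix.kroneckerMap_apply, _root_.map_mul]

lemma kron_psd {κ : Type*} [Fintype κ] [DecidableEq κ] {A : Matrix ι ι ℂ}
    {B : Matrix κ κ ℂ} (hA : A.PosSemidef) (hB : B.PosSemidef) : (A ⊗ₖ B).PosSemidef := by
  exact hA.kronecker hB

/-- rank one matrices are PSD -/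
lemma vecMulVec_psd {v : ι → ℂ} : (Matrix.vecMulVec v (star v)).PosSemidef := by
  have h : Matrix.vecMulVec v (star v) = Matrix.replicateCol (Fin 1) v * (Matrix.replicateCol (Fin 1) v)ᴴ := by
    rw [Matrix.conjTranspose_replicateCol, Matrix.vecMulVec_eq (Fin 1)]
    rfl
  rw [h]
  exact Matrix.posSemidef_self_mul_conjTranspose _


section Topology

lemma isClosed_nonneg_complex : IsClosed {z : ℂ | 0 ≤ z} := by
  have : {z : ℂ | 0 ≤ z} = Complex.re ⁻¹' (Set.Ici 0) ∩ Complex.im ⁻¹' {0} := by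
    ext z
    simp [Complex.nonneg_iff, eq_comm]
  rw [this]
  exact (isClosed_Ici.preimage Complex.continuous_re).inter
    (isClosed_singleton.preimage Complex.continuous_im)

/-- the conjugate-transpose as a real-linear map -/
def ctLM : Matrix ι ι ℂ →ₗ[ℝ] Matrix ι ι ℂ where
  toFun M := Mᴴ
  map_add' M N := Matrix.conjTranspose_add M N
  map_smul' r M := by
    ext i j
    simp [Matrix.conjTranspose_apply, Complex.star_def, Complex.real_smul]

/-- the quadratic form at `x` as a complex-linear map -/
def quadLM (x : ι → ℂ) : Matrix ι ι ℂ →ₗ[ℂ] ℂ where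
  toFun M := dotProduct (star x) (M *ᵥ x)
  map_add' M N := by simp [Matrix.add_mulVec, dotProduct_add]
  map_smul' c M := by simp [Matrix.smul_mulVec, dotProduct_smul]

/-- the trace as a complex-linear map, continuity -/
lemma continuous_trace : Continuous (fun M : Matrix ι ι ℂ => M.trace) :=
  LinearMap.continuous_of_finiteDimensional (Matrix.traceLinearMap ι ℂ ℂ)

lemma isClosed_psd : IsClosed {M : Matrix ι ι ℂ | M.PosSemidef} := by
  have hset : {M : Matrix ι ι ℂ | M.PosSemidef} =
      {M : Matrix ι ι ℂ | ctLM M = M} ∩ ⋂ x : ι → ℂ, (quadLM x) ⁻¹' {z | 0 ≤ z} := by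
    ext M
    simp only [Set.mem_setOf_eq, Set.mem_inter_iff, Set.mem_iInter, Set.mem_preimage]
    exact Matrix.posSemidef_iff_dotProduct_mulVec
  rw [hset]
  refine IsClosed.inter (isClosed_eq (ctLM.continuous_of_finiteDimensional) continuous_id) ?_
  exact isClosed_iInter fun x =>
    isClosed_nonneg_complex.preimage (quadLM x).continuous_of_finiteDimensional

lemma isClosed_states : IsClosed {M : Matrix ι ι ℂ | M.PosSemidef ∧ M.trace = 1} := by
  have : {M : Matrix ι ι ℂ | M.PosSemidef ∧ M.trace = 1} =
      {M : Matrix ι ι ℂ | M.PosSemidef} ∩ {M | M.trace = 1} := rfl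
  rw [this]
  exact isClosed_psd.inter (isClosed_eq continuous_trace continuous_const)

lemma isCompact_states : IsCompact {M : Matrix ι ι ℂ | M.PosSemidef ∧ M.trace = 1} := by
  refine Metric.isCompact_iff_isClosed_bounded.mpr ?_
  refine ⟨isClosed_states, ?_⟩
  rw [isBounded_iff_forall_norm_le]
  refine ⟨2, fun M hM => ?_⟩
  obtain ⟨hpsd, htr⟩ := hM
  rw [Matrix.norm_le_iff (by norm_num : (0:ℝ) ≤ 2)]
  intro i j
  have hb := psd_entry_bound hpsd i j
  have h1 : (M i i).re ≤ 1 := by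
    have := psd_diag_re_le_trace hpsd i
    rw [htr] at this
    simpa using this
  have h2 : (M j j).re ≤ 1 := by
    have := psd_diag_re_le_trace hpsd j
    rw [htr] at this
    simpa using this
  linarith

end Topology

section Caratheodory

lemma sum_dite_fin {α : Type*} [AddCommMonoid α] {k M : ℕ} (hk : k ≤ M) (γ : Fin k → α) :
    (∑ i : Fin M, if h : (i : ℕ) < k then γ ⟨i, h⟩ else 0) = ∑ j : Fin k, γ j := by
  rw [Fin.sum_univ_eq_sum_range (fun m => if h : m < k then γ ⟨m, h⟩ else 0) M]
  rw [← Finset.sum_range_add_sum_Ico _ hk]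
  have h2 : ∑ m ∈ Finset.Ico k M, (if h : m < k then γ ⟨m, h⟩ else 0) = 0 := by
    refine Finset.sum_eq_zero fun m hm => ?_
    rw [dif_neg (by simpa using (Finset.mem_Ico.mp hm).1)]
  rw [h2, add_zero, ← Fin.sum_univ_eq_sum_range (fun m => if h : m < k then γ ⟨m, h⟩ else 0) k]
  refine Finset.sum_congr rfl fun i _ => ?_
  rw [dif_pos i.2]

/-- Convex hull of a compact set in a finite-dimensional space is compact. -/
lemma isCompact_convexHull_fd {E : Type*} [NormedAddCommGroup E] [NormedSpace ℝ E]
    [FiniteDimensional ℝ E] {s : Set E} (hs : IsCompact s) (hne : s.Nonempty) :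
    IsCompact (convexHull ℝ s) := by
  classical
  obtain ⟨p₀, hp₀⟩ := hne
  set M := Module.finrank ℝ E + 1 with hMdef
  have himg : convexHull ℝ s =
      (fun p : (Fin M → ℝ) × (Fin M → E) => ∑ i, p.1 i • p.2 i) ''
        ((stdSimplex ℝ (Fin M)) ×ˢ Set.pi Set.univ fun _ : Fin M => s) := by
    apply Set.Subset.antisymm
    · intro x hx
      obtain ⟨ι', hι', z, w, hzs, hai, hpos, hsum1, hrep⟩ :=
        eq_pos_convex_span_of_mem_convexHull hx
      have : Nonempty ι' := by
        by_contra hne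
        simp only [not_nonempty_iff] at hne
        rw [Finset.univ_eq_empty, Finset.sum_empty] at hsum1
        norm_num at hsum1
      set k := Fintype.card ι' with hk
      have hkM : k ≤ M := by
        have h1 := hai.finrank_vectorSpan_add_one
        have h2 : Module.finrank ℝ (vectorSpan ℝ (Set.range z)) ≤ Module.finrank ℝ E :=
          Submodule.finrank_le _
        omega
      set e := (Fintype.equivFin ι').symm with he
      refine ⟨(fun i => if h : (i : ℕ) < k then w (e ⟨i, h⟩) else 0,
        fun i => if h : (i : ℕ) < k then z (e ⟨i, h⟩) else p₀), ⟨⟨?_, ?_⟩, ?_⟩, ?_⟩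
      · intro i
        dsimp only
        split
        · exact (hpos _).le
        · exact le_refl 0
      · rw [sum_dite_fin hkM (fun i => w (e i))]
        rw [← hsum1]
        exact (Equiv.sum_comp e w)
      · intro i _
        dsimp only
        split
        · exact hzs ⟨_, rfl⟩
        · exact hp₀
      · dsimp only
        have : ∀ i : Fin M,
            (if h : (i : ℕ) < k then w (e ⟨i, h⟩) else 0) •
              (if h : (i : ℕ) < k then z (e ⟨i, h⟩) else p₀) =
            (if h : (i : ℕ) < k then w (e ⟨i, h⟩) • z (e ⟨i, h⟩) else 0) := by
          intro i
          by_cases h : (i : ℕ) < k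
          · rw [dif_pos h, dif_pos h, dif_pos h]
          · rw [dif_neg h, dif_neg h, dif_neg h, zero_smul]
        rw [Finset.sum_congr rfl fun i _ => this i]
        rw [sum_dite_fin hkM (fun i => w (e i) • z (e i))]
        rw [← hrep]
        exact (Equiv.sum_comp e fun j => w j • z j)
    · rintro - ⟨⟨wgt, f⟩, ⟨⟨hw0, hw1⟩, hf⟩, rfl⟩
      have := Finset.centerMass_mem_convexHull (Finset.univ : Finset (Fin M))
        (fun i _ => hw0 i) (by rw [hw1]; norm_num)
        (fun i _ => hf i (Set.mem_univ i))
      rwa [Finset.centerMass_eq_of_sum_1 _ _ hw1] at this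
  rw [himg]
  refine IsCompact.image ?_ ?_
  · exact (isCompact_stdSimplex _ _).prod (isCompact_univ_pi fun _ => hs)
  · exact continuous_finset_sum _ fun i _ =>
      ((continuous_apply i).comp continuous_fst).smul ((continuous_apply i).comp continuous_snd)

end Caratheodory


section Cone

variable {n d : ℕ}

lemma real_smul_coe {κ : Type*} (r : ℝ) (M : Matrix κ κ ℂ) : r • M = (r : ℂ) • M := by
  ext i j
  simp [Matrix.smul_apply, Complex.real_smul]

def SepSet (n d : ℕ) : Set (Matrix (Fin n × Fin d) (Fin n × Fin d) ℂ) := {X | IsSeparableMat X}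

lemma sep_zero : (0 : Matrix (Fin n × Fin d) (Fin n × Fin d) ℂ) ∈ SepSet n d :=
  ⟨0, Fin.elim0, Fin.elim0, fun i => i.elim0, fun i => i.elim0, by simp⟩

lemma sep_add {X Y : Matrix (Fin n × Fin d) (Fin n × Fin d) ℂ}
    (hX : X ∈ SepSet n d) (hY : Y ∈ SepSet n d) : X + Y ∈ SepSet n d := by
  obtain ⟨N₁, A₁, B₁, hA₁, hB₁, rfl⟩ := hX
  obtain ⟨N₂, A₂, B₂, hA₂, hB₂, rfl⟩ := hY
  refine ⟨N₁ + N₂, Fin.append A₁ A₂, Fin.append B₁ B₂, ?_, ?_, ?_⟩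
  · refine Fin.addCases ?_ ?_ <;> intro i
    · rw [Fin.append_left]; exact hA₁ i
    · rw [Fin.append_right]; exact hA₂ i
  · refine Fin.addCases ?_ ?_ <;> intro i
    · rw [Fin.append_left]; exact hB₁ i
    · rw [Fin.append_right]; exact hB₂ i
  · rw [Fin.sum_univ_add]
    congr 1
    · exact Finset.sum_congr rfl fun i _ => by rw [Fin.append_left, Fin.append_left]
    · exact Finset.sum_congr rfl fun i _ => by rw [Fin.append_right, Fin.append_right]

lemma sep_smul {X : Matrix (Fin n × Fin d) (Fin n × Fin d) ℂ}
    (hX : X ∈ SepSet n d) {t : ℝ} (ht : 0 ≤ t) : (t : ℂ) • X ∈ SepSet n d := by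
  obtain ⟨N, A, B, hA, hB, rfl⟩ := hX
  refine ⟨N, fun i => (t : ℂ) • A i, B, fun i => psd_smul_real (hA i) ht, hB, ?_⟩
  rw [Finset.smul_sum]
  exact Finset.sum_congr rfl fun i _ => (Matrix.smul_kronecker _ _ _).symm

lemma sep_convex : Convex ℝ (SepSet n d) := by
  intro x hx y hy a b ha hb _
  rw [real_smul_coe, real_smul_coe]
  exact sep_add (sep_smul hx ha) (sep_smul hy hb)

lemma sep_herm {X : Matrix (Fin n × Fin d) (Fin n × Fin d) ℂ}
    (hX : X ∈ SepSet n d) : Xᴴ = X := by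
  obtain ⟨N, A, B, hA, hB, rfl⟩ := hX
  rw [Matrix.conjTranspose_sum]
  exact Finset.sum_congr rfl fun i _ => by
    rw [kron_conjTranspose, (hA i).1, (hB i).1]

def stateSet (m : ℕ) : Set (Matrix (Fin m) (Fin m) ℂ) := {M | M.PosSemidef ∧ M.trace = 1}

lemma stateSet_nonempty {m : ℕ} (hm : 1 ≤ m) : (stateSet m).Nonempty := by
  have hm0 : (m : ℂ) ≠ 0 := Nat.cast_ne_zero.mpr (by omega)
  refine ⟨(((m:ℝ)⁻¹ : ℝ) : ℂ) • (1 : Matrix (Fin m) (Fin m) ℂ), ?_, ?_⟩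
  · exact psd_smul_real Matrix.PosSemidef.one (inv_nonneg.mpr (Nat.cast_nonneg m))
  · rw [Matrix.trace_smul, Matrix.trace_one]
    simp only [smul_eq_mul, Fintype.card_fin]
    push_cast
    field_simp

def prodBase (n d : ℕ) : Set (Matrix (Fin n × Fin d) (Fin n × Fin d) ℂ) :=
  (fun p : Matrix (Fin n) (Fin n) ℂ × Matrix (Fin d) (Fin d) ℂ => p.1 ⊗ₖ p.2) ''
    ((stateSet n) ×ˢ (stateSet d))

lemma prodBase_nonempty (hn : 1 ≤ n) (hd : 1 ≤ d) : (prodBase n d).Nonempty := by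
  obtain ⟨A, hA⟩ := stateSet_nonempty hn
  obtain ⟨B, hB⟩ := stateSet_nonempty hd
  exact ⟨A ⊗ₖ B, ⟨(A, B), ⟨hA, hB⟩, rfl⟩⟩

lemma prodBase_compact : IsCompact (prodBase n d) := by
  refine (isCompact_states.prod isCompact_states).image ?_
  refine continuous_matrix fun i j => ?_
  simp only [Matrix.kroneckerMap_apply]
  exact (continuous_fst.matrix_elem i.1 j.1).mul (continuous_snd.matrix_elem i.2 j.2)

lemma prodBase_sub_sep : prodBase n d ⊆ SepSet n d := by
  rintro - ⟨⟨A, B⟩, ⟨hA, hB⟩, rfl⟩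
  exact ⟨1, fun _ => A, fun _ => B, fun _ => hA.1, fun _ => hB.1, by simp⟩

lemma prodBase_trace {X : Matrix (Fin n × Fin d) (Fin n × Fin d) ℂ}
    (hX : X ∈ prodBase n d) : X.trace = 1 := by
  obtain ⟨⟨A, B⟩, ⟨hA, hB⟩, rfl⟩ := hX
  rw [Matrix.trace_kronecker, hA.2, hB.2, mul_one]

def baseK (n d : ℕ) : Set (Matrix (Fin n × Fin d) (Fin n × Fin d) ℂ) :=
  convexHull ℝ (prodBase n d)

lemma baseK_compact (hn : 1 ≤ n) (hd : 1 ≤ d) : IsCompact (baseK n d) :=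
  isCompact_convexHull_fd prodBase_compact (prodBase_nonempty hn hd)

lemma baseK_trace {X : Matrix (Fin n × Fin d) (Fin n × Fin d) ℂ}
    (hX : X ∈ baseK n d) : X.trace = 1 := by
  have hconv : Convex ℝ {M : Matrix (Fin n × Fin d) (Fin n × Fin d) ℂ | M.trace = 1} := by
    intro x hx y hy a b ha hb hab
    simp only [Set.mem_setOf_eq] at hx hy ⊢
    rw [Matrix.trace_add, Matrix.trace_smul, Matrix.trace_smul, hx, hy,
      Complex.real_smul, Complex.real_smul, mul_one, mul_one]
    exact_mod_cast congrArg (fun r : ℝ => (r : ℂ)) hab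
  exact convexHull_min (fun X hX => prodBase_trace hX) hconv hX

lemma baseK_sub_sep : baseK n d ⊆ SepSet n d :=
  convexHull_min prodBase_sub_sep sep_convex

def coneS (n d : ℕ) : Set (Matrix (Fin n × Fin d) (Fin n × Fin d) ℂ) :=
  {Z | ∃ t : ℝ, 0 ≤ t ∧ ∃ y ∈ baseK n d, Z = (t : ℂ) • y}

lemma cone_sub_sep : coneS n d ⊆ SepSet n d := by
  rintro - ⟨t, ht, y, hy, rfl⟩
  exact sep_smul (baseK_sub_sep hy) ht


lemma sep_sub_cone (hn : 1 ≤ n) (hd : 1 ≤ d) : SepSet n d ⊆ coneS n d := by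
  rintro X ⟨N, A, B, hA, hB, rfl⟩
  obtain ⟨P₀, hP₀⟩ := prodBase_nonempty hn hd
  set t : Fin N → ℝ := fun i => (A i).trace.re * (B i).trace.re with htdef
  have ht0 : ∀ i, 0 ≤ t i := fun i =>
    mul_nonneg (psd_trace_re_nonneg (hA i)) (psd_trace_re_nonneg (hB i))
  have hGex : ∀ i, ∃ G ∈ prodBase n d, A i ⊗ₖ B i = ((t i : ℝ) : ℂ) • G := by
    intro i
    by_cases hti : t i = 0
    · refine ⟨P₀, hP₀, ?_⟩
      rw [hti, Complex.ofReal_zero, zero_smul]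
      rcases mul_eq_zero.mp hti with h | h
      · have h1 : (A i).trace = 0 := by rw [psd_trace_re_eq (hA i), h]; simp
        rw [psd_trace_zero_eq_zero (hA i) h1, Matrix.zero_kronecker]
      · have h1 : (B i).trace = 0 := by rw [psd_trace_re_eq (hB i), h]; simp
        rw [psd_trace_zero_eq_zero (hB i) h1, Matrix.kronecker_zero]
    · have hta : (A i).trace.re ≠ 0 := fun h => hti (by rw [htdef]; simp [h])
      have htb : (B i).trace.re ≠ 0 := fun h => hti (by rw [htdef]; simp [h])
      set ra := (A i).trace.re
      set rb := (B i).trace.re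
      refine ⟨(((ra⁻¹ : ℝ) : ℂ) • A i) ⊗ₖ (((rb⁻¹ : ℝ) : ℂ) • B i), ⟨(((ra⁻¹ : ℝ) : ℂ) • A i,
        ((rb⁻¹ : ℝ) : ℂ) • B i), ⟨⟨psd_smul_real (hA i) (inv_nonneg.mpr ?_),
        ?_⟩, ⟨psd_smul_real (hB i) (inv_nonneg.mpr ?_), ?_⟩⟩, rfl⟩, ?_⟩
      · exact psd_trace_re_nonneg (hA i)
      · rw [Matrix.trace_smul, psd_trace_re_eq (hA i), smul_eq_mul]
        rw [← Complex.ofReal_mul, inv_mul_cancel₀ hta, Complex.ofReal_one]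
      · exact psd_trace_re_nonneg (hB i)
      · rw [Matrix.trace_smul, psd_trace_re_eq (hB i), smul_eq_mul]
        rw [← Complex.ofReal_mul, inv_mul_cancel₀ htb, Complex.ofReal_one]
      · rw [Matrix.smul_kronecker, Matrix.kronecker_smul, smul_smul, smul_smul]
        have heq : ((t i : ℝ) : ℂ) * ((ra⁻¹ : ℝ) : ℂ) * ((rb⁻¹ : ℝ) : ℂ) = 1 := by
          have h0 : t i = ra * rb := rfl
          have hca : (ra : ℂ) ≠ 0 := Complex.ofReal_ne_zero.mpr hta
          have hcb : (rb : ℂ) ≠ 0 := Complex.ofReal_ne_zero.mpr htb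
          rw [h0]
          push_cast
          field_simp
        rw [heq, one_smul]
  choose G hGmem hGeq using hGex
  set T := ∑ i, t i with hT
  have hT0 : 0 ≤ T := Finset.sum_nonneg fun i _ => ht0 i
  rcases eq_or_lt_of_le hT0 with hTz | hTpos
  · refine ⟨0, le_refl 0, P₀, subset_convexHull ℝ _ hP₀, ?_⟩
    rw [Complex.ofReal_zero, zero_smul]
    have hti : ∀ i, t i = 0 := by
      intro i
      have := (Finset.sum_eq_zero_iff_of_nonneg (fun i _ => ht0 i)).mp hTz.symm
      exact this i (Finset.mem_univ i)
    refine Finset.sum_eq_zero fun i _ => ?_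
    rw [hGeq i, hti i, Complex.ofReal_zero, zero_smul]
  · set y := ∑ i, (t i / T) • G i with hy
    have hymem : y ∈ baseK n d := by
      have := Finset.centerMass_mem_convexHull (Finset.univ : Finset (Fin N))
        (fun i _ => div_nonneg (ht0 i) hT0) (w := fun i => t i / T) (z := G)
        (by rw [← Finset.sum_div, ← hT, div_self hTpos.ne']; norm_num)
        (fun i _ => hGmem i)
      rwa [Finset.centerMass_eq_of_sum_1 _ _
        (by rw [← Finset.sum_div, ← hT, div_self hTpos.ne'])] at this
    refine ⟨T, hT0, y, hymem, ?_⟩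
    rw [hy, Finset.smul_sum]
    refine Finset.sum_congr rfl fun i _ => ?_
    rw [hGeq i, real_smul_coe (t i / T) (G i), smul_smul, ← Complex.ofReal_mul,
      mul_div_cancel₀ _ hTpos.ne']

lemma cone_smul {Z : Matrix (Fin n × Fin d) (Fin n × Fin d) ℂ}
    (hZ : Z ∈ coneS n d) {s : ℝ} (hs : 0 ≤ s) : (s : ℂ) • Z ∈ coneS n d := by
  obtain ⟨t, ht, y, hy, rfl⟩ := hZ
  refine ⟨s * t, mul_nonneg hs ht, y, hy, ?_⟩
  rw [smul_smul, ← Complex.ofReal_mul]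

lemma cone_zero (hn : 1 ≤ n) (hd : 1 ≤ d) :
    (0 : Matrix (Fin n × Fin d) (Fin n × Fin d) ℂ) ∈ coneS n d :=
  sep_sub_cone hn hd sep_zero

lemma cone_isClosed (hn : 1 ≤ n) (hd : 1 ≤ d) : IsClosed (coneS n d) := by
  haveI : FirstCountableTopology (Matrix (Fin n × Fin d) (Fin n × Fin d) ℂ) :=
    inferInstanceAs (FirstCountableTopology ((Fin n × Fin d) → (Fin n × Fin d) → ℂ))
  refine IsSeqClosed.isClosed ?_
  intro z Z hz hlim
  choose t ht y hy he using hz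
  have htrace : ∀ k, (z k).trace = ((t k : ℝ) : ℂ) := by
    intro k
    rw [he k, Matrix.trace_smul, baseK_trace (hy k), smul_eq_mul, mul_one]
  have htlim : Filter.Tendsto t Filter.atTop (nhds Z.trace.re) := by
    have h1 : Filter.Tendsto (fun k => (z k).trace) Filter.atTop (nhds Z.trace) :=
      (continuous_trace.tendsto Z).comp hlim
    have h2 : Filter.Tendsto (fun k => (z k).trace.re) Filter.atTop (nhds Z.trace.re) :=
      (Complex.continuous_re.tendsto _).comp h1
    have : (fun k => (z k).trace.re) = t := by
      funext k
      rw [htrace k, Complex.ofReal_re]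
    rwa [this] at h2
  set T := Z.trace.re with hTdef
  have hT0 : 0 ≤ T := ge_of_tendsto htlim (Filter.Eventually.of_forall ht)
  obtain ⟨ylim, hylim, φ, hφmono, hφlim⟩ :=
    (baseK_compact hn hd).isSeqCompact hy
  have hzφ : Filter.Tendsto (z ∘ φ) Filter.atTop (nhds Z) :=
    hlim.comp hφmono.tendsto_atTop
  have h2 : Filter.Tendsto (fun k => ((t (φ k) : ℝ) : ℂ) • y (φ k)) Filter.atTop
      (nhds ((T : ℂ) • ylim)) := by
    refine Filter.Tendsto.smul ?_ hφlim
    exact (Complex.continuous_ofReal.tendsto _).comp (htlim.comp hφmono.tendsto_atTop)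
  have hze : (z ∘ φ) = fun k => ((t (φ k) : ℝ) : ℂ) • y (φ k) := by
    funext k
    exact he (φ k)
  rw [hze] at hzφ
  exact ⟨T, hT0, ylim, hylim, tendsto_nhds_unique hzφ h2⟩

end Cone


section Functional

variable {ι : Type*} [Fintype ι] [DecidableEq ι]

/-- complex coefficients representing a real-linear functional -/
def cf (g : Matrix ι ι ℂ →L[ℝ] ℝ) (p q : ι) : ℂ :=
  (g (Matrix.single p q 1) : ℂ) -
    (g (Complex.I • Matrix.single p q 1) : ℝ) * Complex.I

lemma cf_spec (g : Matrix ι ι ℂ →L[ℝ] ℝ) (p q : ι) (z : ℂ) :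
    (cf g p q * z).re = g (z • Matrix.single p q 1) := by
  have hz : z • (Matrix.single p q (1:ℂ)) =
      z.re • Matrix.single p q 1 +
        z.im • (Complex.I • Matrix.single p q 1) := by
    rw [real_smul_coe z.re, real_smul_coe z.im, smul_smul, ← add_smul]
    congr 1
    exact (Complex.re_add_im z).symm
  rw [hz, map_add, _root_.map_smul, _root_.map_smul]
  simp only [cf, smul_eq_mul, Complex.sub_re, Complex.sub_im, Complex.mul_re, Complex.ofReal_re,
    Complex.ofReal_im, Complex.mul_im, Complex.I_re, Complex.I_im]
  ring

lemma rep (g : Matrix ι ι ℂ →L[ℝ] ℝ) (Z : Matrix ι ι ℂ) :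
    g Z = ∑ p, ∑ q, (cf g p q * Z p q).re := by
  conv_lhs => rw [Matrix.matrix_eq_sum_single Z]
  rw [map_sum]
  refine Finset.sum_congr rfl fun p _ => ?_
  rw [map_sum]
  refine Finset.sum_congr rfl fun q _ => ?_
  rw [cf_spec]
  congr 1
  rw [Matrix.smul_single, smul_eq_mul, mul_one]

/-- hermitized coefficients -/
def cf' (g : Matrix ι ι ℂ →L[ℝ] ℝ) (p q : ι) : ℂ :=
  (cf g p q + starRingEnd ℂ (cf g q p)) / 2

lemma cf'_herm (g : Matrix ι ι ℂ →L[ℝ] ℝ) (p q : ι) :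
    starRingEnd ℂ (cf' g q p) = cf' g p q := by
  simp only [cf', map_div₀, map_add, Complex.conj_conj, map_ofNat]
  ring

lemma rep_herm (g : Matrix ι ι ℂ →L[ℝ] ℝ) {Z : Matrix ι ι ℂ} (hZ : Zᴴ = Z) :
    g Z = ∑ p, ∑ q, (cf' g p q * Z p q).re := by
  have h2 : ∀ p q : ι, (cf' g p q * Z p q).re =
      ((cf g p q * Z p q).re + (starRingEnd ℂ (cf g q p) * Z p q).re) / 2 := by
    intro p q
    have h3 : cf' g p q * Z p q =
        (cf g p q * Z p q + starRingEnd ℂ (cf g q p) * Z p q) / 2 := by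
      rw [cf']; ring
    rw [h3]
    have h4 : ((cf g p q * Z p q + starRingEnd ℂ (cf g q p) * Z p q) / 2 : ℂ)
        = (cf g p q * Z p q + starRingEnd ℂ (cf g q p) * Z p q) / ((2:ℝ) : ℂ) := by
      norm_num
    rw [h4, Complex.div_ofReal_re, Complex.add_re]
  have hS2 : ∑ p, ∑ q, (starRingEnd ℂ (cf g q p) * Z p q).re =
      ∑ p, ∑ q, (cf g p q * Z p q).re := by
    have hpt : ∀ p q : ι, (starRingEnd ℂ (cf g q p) * Z p q).re =
        (cf g q p * Z q p).re := by
      intro p q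
      have : starRingEnd ℂ (cf g q p) * Z p q =
          starRingEnd ℂ (cf g q p * starRingEnd ℂ (Z p q)) := by
        rw [_root_.map_mul, Complex.conj_conj]
      rw [this, Complex.conj_re]
      congr 2
      exact herm_conj_entry hZ p q
    calc ∑ p, ∑ q, (starRingEnd ℂ (cf g q p) * Z p q).re
        = ∑ p, ∑ q, (cf g q p * Z q p).re :=
          Finset.sum_congr rfl fun p _ => Finset.sum_congr rfl fun q _ => hpt p q
      _ = ∑ q, ∑ p, (cf g q p * Z q p).re := Finset.sum_comm
      _ = ∑ p, ∑ q, (cf g p q * Z p q).re := rfl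
  calc g Z = ∑ p, ∑ q, (cf g p q * Z p q).re := rep g Z
    _ = ∑ p, ∑ q, (cf' g p q * Z p q).re := by
        have hdist : ∑ p, ∑ q,
              ((cf g p q * Z p q).re + ((starRingEnd ℂ) (cf g q p) * Z p q).re) / 2
            = ((∑ p, ∑ q, (cf g p q * Z p q).re) +
                ∑ p, ∑ q, ((starRingEnd ℂ) (cf g q p) * Z p q).re) / 2 := by
          rw [← Finset.sum_add_distrib, Finset.sum_div]
          exact Finset.sum_congr rfl fun p _ => by
            rw [← Finset.sum_add_distrib, Finset.sum_div]
        simp only [h2]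
        rw [hdist, hS2]
        ring

lemma herm_pairing_selfconj {W Z : Matrix ι ι ℂ}
    (hW : ∀ p q, starRingEnd ℂ (W q p) = W p q) (hZ : Zᴴ = Z) :
    starRingEnd ℂ (∑ p, ∑ q, W p q * Z p q) = ∑ p, ∑ q, W p q * Z p q := by
  rw [map_sum]
  calc ∑ p, starRingEnd ℂ (∑ q, W p q * Z p q)
      = ∑ p, ∑ q, W q p * Z q p := by
        refine Finset.sum_congr rfl fun p _ => ?_
        rw [map_sum]
        refine Finset.sum_congr rfl fun q _ => ?_
        rw [_root_.map_mul, hW q p, herm_conj_entry hZ p q]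
    _ = ∑ q, ∑ p, W q p * Z q p := Finset.sum_comm
    _ = ∑ p, ∑ q, W p q * Z p q := rfl

lemma re_double_sum (f : ι → ι → ℂ) :
    (∑ p, ∑ q, f p q).re = ∑ p, ∑ q, (f p q).re := by
  rw [Complex.re_sum]
  exact Finset.sum_congr rfl fun p _ => Complex.re_sum _ _

end Functional


section Ups

variable {n d : ℕ}

lemma quad_expand {κ : Type*} [Fintype κ] (M : Matrix κ κ ℂ) (x : κ → ℂ) :
    dotProduct (star x) (M *ᵥ x) = ∑ p, ∑ q, (starRingEnd ℂ) (x p) * M p q * x q := by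
  simp only [dotProduct, Matrix.mulVec, Pi.star_apply, Complex.star_def, Finset.mul_sum]
  exact Finset.sum_congr rfl fun p _ => Finset.sum_congr rfl fun q _ => by ring

lemma psd_sum' {κ ρ : Type*} [Fintype κ] [Fintype ρ] [DecidableEq κ]
    (f : ρ → Matrix κ κ ℂ) (hf : ∀ i, (f i).PosSemidef) : (∑ i, f i).PosSemidef :=
  Finset.sum_induction f _ (fun _ _ ha hb => ha.add hb) Matrix.PosSemidef.zero
    (fun i _ => hf i)

def UpsMap (c : Matrix (Fin n × Fin d) (Fin n × Fin d) ℂ) :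
    Matrix (Fin d) (Fin d) ℂ →ₗ[ℂ] Matrix (Fin n) (Fin n) ℂ where
  toFun B := Matrix.of fun i j => ∑ a, ∑ b, c (i, a) (j, b) * B a b
  map_add' B₁ B₂ := by
    ext i j
    simp only [Matrix.of_apply, Matrix.add_apply, mul_add]
    rw [← Finset.sum_add_distrib]
    exact Finset.sum_congr rfl fun a _ => by rw [← Finset.sum_add_distrib]
  map_smul' z B := by
    ext i j
    simp only [Matrix.of_apply, Matrix.smul_apply, smul_eq_mul, RingHom.id_apply]
    rw [Finset.mul_sum]
    refine Finset.sum_congr rfl fun a _ => ?_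
    rw [Finset.mul_sum]
    exact Finset.sum_congr rfl fun b _ => by ring

lemma UpsMap_apply (c : Matrix (Fin n × Fin d) (Fin n × Fin d) ℂ)
    (B : Matrix (Fin d) (Fin d) ℂ) (i j : Fin n) :
    (UpsMap c) B i j = ∑ a, ∑ b, c (i, a) (j, b) * B a b := rfl

lemma UpsMap_pos (c : Matrix (Fin n × Fin d) (Fin n × Fin d) ℂ)
    (hc : ∀ p q, starRingEnd ℂ (c q p) = c p q)
    (hw : ∀ (u : Fin n → ℂ) (v : Fin d → ℂ),
      0 ≤ ∑ p : Fin n × Fin d, ∑ q : Fin n × Fin d,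
        c p q * ((u p.1 * v p.2) * starRingEnd ℂ (u q.1 * v q.2)))
    {B : Matrix (Fin d) (Fin d) ℂ} (hB : B.PosSemidef) : ((UpsMap c) B).PosSemidef := by
  obtain ⟨C, hC⟩ := psd_eq_conjTranspose_mul_self' hB
  have hrank1 : ∀ v : Fin d → ℂ, ((UpsMap c) (Matrix.vecMulVec v (star v))).PosSemidef := by
    intro v
    refine Matrix.PosSemidef.of_dotProduct_mulVec_nonneg ?_ ?_
    · ext i j
      rw [Matrix.conjTranspose_apply, UpsMap_apply, UpsMap_apply]
      simp only [Matrix.vecMulVec_apply, Pi.star_apply, Complex.star_def]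
      calc (starRingEnd ℂ) (∑ a, ∑ b, c (j, a) (i, b) * (v a * (starRingEnd ℂ) (v b)))
          = ∑ a, ∑ b, c (i, b) (j, a) * (v b * (starRingEnd ℂ) (v a)) := by
            rw [map_sum]
            refine Finset.sum_congr rfl fun a _ => ?_
            rw [map_sum]
            refine Finset.sum_congr rfl fun b _ => ?_
            rw [_root_.map_mul, _root_.map_mul, hc (i, b) (j, a), Complex.conj_conj]
            ring
        _ = ∑ a, ∑ b, c (i, a) (j, b) * (v a * (starRingEnd ℂ) (v b)) := Finset.sum_comm
    · intro x
      have hkey : dotProduct (star x) (((UpsMap c) (Matrix.vecMulVec v (star v))) *ᵥ x) =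
          ∑ p : Fin n × Fin d, ∑ q : Fin n × Fin d,
            c p q * ((((starRingEnd ℂ) ∘ x) p.1 * v p.2) *
              (starRingEnd ℂ) (((starRingEnd ℂ) ∘ x) q.1 * v q.2)) := by
        rw [quad_expand]
        simp only [UpsMap_apply, Matrix.vecMulVec_apply, Pi.star_apply, Complex.star_def,
          Fintype.sum_prod_type, Function.comp_apply, _root_.map_mul, Complex.conj_conj,
          Finset.mul_sum, Finset.sum_mul]
        refine Finset.sum_congr rfl fun i _ => ?_
        rw [Finset.sum_comm]
        refine Finset.sum_congr rfl fun a _ => Finset.sum_congr rfl fun j _ =>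
          Finset.sum_congr rfl fun b _ => by ring
      rw [hkey]
      exact hw ((starRingEnd ℂ) ∘ x) v
  have hBsum : B = ∑ k, Matrix.vecMulVec (star (C k)) (star (star (C k))) := by
    rw [hC]
    ext a b
    simp [Matrix.mul_apply, Matrix.conjTranspose_apply, Matrix.vecMulVec_apply,
      Matrix.sum_apply, Pi.star_apply, Complex.star_def]
  rw [hBsum, map_sum]
  exact psd_sum' _ fun k => hrank1 _

end Ups

end EBaux

section MainProof

attribute [local instance] Matrix.normedAddCommGroup Matrix.normedSpace

open EBaux in
/-- (B) ⇔ (E) of Theorem 2: `Φ` is entanglement breaking iff `Υ ∘ Φ` is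
completely positive for every positivity-preserving linear map `Υ`. -/
theorem entanglement_breaking_iff_comp_left_positivity_preserving
    {d : ℕ} (Φ : Matrix (Fin d) (Fin d) ℂ →ₗ[ℂ] Matrix (Fin d) (Fin d) ℂ) :
    EntBreaking (fun ρ => Φ ρ) ↔
      ∀ m : ℕ, 1 ≤ m →
        ∀ Υ : Matrix (Fin d) (Fin d) ℂ →ₗ[ℂ] Matrix (Fin m) (Fin m) ℂ,
          (∀ X : Matrix (Fin d) (Fin d) ℂ, X.PosSemidef → (Υ X).PosSemidef) →
          CompletelyPositive (fun ρ => Υ (Φ ρ)) := by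
  classical
  constructor
  · intro hEB m hm Υ hΥ n hn Γ hΓ
    obtain ⟨N, A, B, hA, hB, hX⟩ := hEB n hn Γ hΓ
    have key : tensorId n (fun ρ => Υ (Φ ρ)) Γ = ∑ i, (A i) ⊗ₖ (Υ (B i)) := by
      ext p q
      have hblock : (Φ (fun a b => Γ (p.1, a) (q.1, b))) = ∑ k, A k p.1 q.1 • B k := by
        ext a b
        have h1 := congrFun (congrFun hX (p.1, a)) (q.1, b)
        simp only [tensorId] at h1
        rw [h1]
        simp [Matrix.sum_apply, Matrix.kroneckerMap_apply, Matrix.smul_apply, smul_eq_mul]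
      show Υ (Φ (fun a b => Γ (p.1, a) (q.1, b))) p.2 q.2 = _
      rw [hblock, map_sum]
      simp [_root_.map_smul, Matrix.sum_apply, Matrix.smul_apply, smul_eq_mul,
        Matrix.kroneckerMap_apply]
    rw [key]
    exact psd_sum' _ fun i => kron_psd (hA i) (hΥ _ (hB i))
  · intro hyp n hn Γ hΓ
    by_cases hd0 : d = 0
    · subst hd0
      exact ⟨0, Fin.elim0, Fin.elim0, fun i => i.elim0, fun i => i.elim0, by
        ext p q
        exact p.2.elim0⟩
    have hd : 1 ≤ d := Nat.one_le_iff_ne_zero.mpr hd0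
    set X := tensorId n (fun ρ => Φ ρ) Γ with hXdef
    have hXpsd : X.PosSemidef := hyp d hd LinearMap.id (fun _ h => h) n hn Γ hΓ
    by_contra hns
    have hXnotcone : X ∉ coneS n d := fun hmem => hns (cone_sub_sep hmem)
    have hconeeq : coneS n d = SepSet n d :=
      subset_antisymm cone_sub_sep (sep_sub_cone hn hd)
    have hconvex : Convex ℝ (coneS n d) := by rw [hconeeq]; exact sep_convex
    haveI : LocallyConvexSpace ℝ (Matrix (Fin n × Fin d) (Fin n × Fin d) ℂ) :=
      inferInstanceAs (LocallyConvexSpace ℝ ((Fin n × Fin d) → (Fin n × Fin d) → ℂ))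
    obtain ⟨f, u, hfu, hux⟩ :=
      geometric_hahn_banach_closed_point hconvex (cone_isClosed hn hd) hXnotcone
    have hu0 : 0 < u := by
      have := hfu 0 (cone_zero hn hd)
      rwa [map_zero] at this
    have hfnonpos : ∀ a ∈ coneS n d, f a ≤ 0 := by
      intro a ha
      by_contra hpos
      push_neg at hpos
      set t : ℝ := (u + 1) / f a with htdef
      have ht : 0 ≤ t := div_nonneg (by linarith) hpos.le
      have hmem : ((t : ℝ) : ℂ) • a ∈ coneS n d := cone_smul ha ht
      have := hfu _ hmem
      rw [← real_smul_coe, f.map_smul, smul_eq_mul, htdef, div_mul_cancel₀ _ hpos.ne'] at this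
      linarith
    set g : Matrix (Fin n × Fin d) (Fin n × Fin d) ℂ →L[ℝ] ℝ := -f with hgdef
    have hg0 : ∀ a ∈ coneS n d, 0 ≤ g a := by
      intro a ha
      have := hfnonpos a ha
      simp only [hgdef, ContinuousLinearMap.neg_apply]
      linarith
    have hgX : g X < 0 := by
      simp only [hgdef, ContinuousLinearMap.neg_apply]
      linarith
    -- the witness coefficients
    set cmat : Matrix (Fin n × Fin d) (Fin n × Fin d) ℂ := Matrix.of (cf' g) with hcmatdef
    have hcherm : ∀ p q, starRingEnd ℂ (cmat q p) = cmat p q := fun p q => cf'_herm g p q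
    have hw : ∀ (uu : Fin n → ℂ) (vv : Fin d → ℂ),
        0 ≤ ∑ p : Fin n × Fin d, ∑ q : Fin n × Fin d,
          cmat p q * ((uu p.1 * vv p.2) * starRingEnd ℂ (uu q.1 * vv q.2)) := by
      intro uu vv
      set A := Matrix.vecMulVec uu (star uu) with hAdef
      set B := Matrix.vecMulVec vv (star vv) with hBdef
      have hABsep : A ⊗ₖ B ∈ SepSet n d :=
        ⟨1, fun _ => A, fun _ => B, fun _ => vecMulVec_psd, fun _ => vecMulVec_psd, by simp⟩
      have hABcone : A ⊗ₖ B ∈ coneS n d := sep_sub_cone hn hd hABsep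
      have hherm : (A ⊗ₖ B)ᴴ = A ⊗ₖ B := sep_herm hABsep
      have hentry : ∀ p q : Fin n × Fin d,
          (A ⊗ₖ B) p q = (uu p.1 * vv p.2) * starRingEnd ℂ (uu q.1 * vv q.2) := by
        intro p q
        simp only [hAdef, hBdef, Matrix.kroneckerMap_apply, Matrix.vecMulVec_apply,
          Pi.star_apply, Complex.star_def, _root_.map_mul]
        ring
      have hz1 : ∑ p : Fin n × Fin d, ∑ q : Fin n × Fin d,
          cmat p q * ((uu p.1 * vv p.2) * starRingEnd ℂ (uu q.1 * vv q.2)) =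
          ∑ p, ∑ q, cmat p q * (A ⊗ₖ B) p q := by
        exact Finset.sum_congr rfl fun p _ => Finset.sum_congr rfl fun q _ => by
          rw [hentry p q]
      rw [hz1]
      have hconj := herm_pairing_selfconj hcherm hherm
      have hre : 0 ≤ (∑ p, ∑ q, cmat p q * (A ⊗ₖ B) p q).re := by
        have hrep := rep_herm g hherm
        have h5 : (∑ p, ∑ q, cmat p q * (A ⊗ₖ B) p q).re =
            ∑ p, ∑ q, (cmat p q * (A ⊗ₖ B) p q).re := re_double_sum _
        rw [h5, hcmatdef]
        simp only [Matrix.of_apply]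
        rw [← hrep]
        exact hg0 _ hABcone
      exact Complex.nonneg_iff.mpr ⟨hre, (Complex.conj_eq_iff_im.mp hconj).symm⟩
    have hΥpos : ∀ Z : Matrix (Fin d) (Fin d) ℂ, Z.PosSemidef →
        ((UpsMap cmat) Z).PosSemidef := fun Z hZ => UpsMap_pos cmat hcherm hw hZ
    have hY := hyp n hn (UpsMap cmat) hΥpos n hn Γ hΓ
    set Y := tensorId n (fun ρ => (UpsMap cmat) (Φ ρ)) Γ with hYdef
    set ω : Fin n × Fin n → ℂ := fun p => if p.1 = p.2 then 1 else 0 with hωdef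
    have hquad := hY.dotProduct_mulVec_nonneg ω
    rw [quad_expand] at hquad
    have hsum : ∑ p : Fin n × Fin n, ∑ q : Fin n × Fin n,
        (starRingEnd ℂ) (ω p) * Y p q * ω q =
        ∑ p : Fin n × Fin d, ∑ q : Fin n × Fin d, cmat p q * X p q := by
      have hdiag : ∑ p : Fin n × Fin n, ∑ q : Fin n × Fin n,
          (starRingEnd ℂ) (ω p) * Y p q * ω q = ∑ i, ∑ j, Y (i, i) (j, j) := by
        simp [hωdef, Fintype.sum_prod_type, apply_ite (starRingEnd ℂ), ite_mul, mul_ite,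
          Finset.sum_ite_eq, Finset.sum_ite_eq']
      rw [hdiag]
      have hYent : ∀ i j : Fin n, Y (i, i) (j, j) =
          ∑ a, ∑ b, cmat (i, a) (j, b) * X (i, a) (j, b) := fun i j => rfl
      simp only [hYent]
      rw [Fintype.sum_prod_type]
      refine Finset.sum_congr rfl fun i _ => ?_
      rw [Finset.sum_comm]
      exact Finset.sum_congr rfl fun a _ => by rw [Fintype.sum_prod_type]
    rw [hsum] at hquad
    have hre : 0 ≤ (∑ p, ∑ q, cmat p q * X p q).re := (Complex.nonneg_iff.mp hquad).1
    have hgXeq : g X = (∑ p, ∑ q, cmat p q * X p q).re := by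
      rw [rep_herm g hXpsd.1, re_double_sum, hcmatdef]
      simp only [Matrix.of_apply]
    linarith [hgXeq ▸ hre]



end MainProof
end
end

section
/- Every extreme CQ map on d×d complex matrices is an extreme point of the set of EBT maps: if Φ(ρ) = Σ_{k=1}^d |ψ_k⟩⟨ψ_k| · ⟨e_k, ρ e_k⟩ with {e_k} an orthonormal basis of ℂ^d and each ψ_k a unit vector, and Φ = aΦ₁ + (1−a)Φ₂ with 0 < a < 1 and Φ₁, Φ₂ EBT maps, then Φ₁ = Φ₂ = Φ. (Theorem 3, part A.) -/
open Matrix Kronecker BigOperators ComplexOrder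

noncomputable section

/-! ### Auxiliary machinery for the proof -/

section Helpers

lemma posSemidef_vecMulVec' {n : Type*} [Fintype n] [DecidableEq n] (v : n → ℂ) :
    (vecMulVec v (star v)).PosSemidef := by
  exact posSemidef_vecMulVec_self_star v

lemma posSemidef_real_smul' {n : Type*} [Fintype n] {M : Matrix n n ℂ} (hM : M.PosSemidef)
    {r : ℝ} (hr : 0 ≤ r) : ((r : ℂ) • M).PosSemidef := by
  refine .of_dotProduct_mulVec_nonneg ?_ ?_
  · have := hM.1
    unfold Matrix.IsHermitian at *
    ext i j
    simp only [conjTranspose_apply, Matrix.smul_apply, smul_eq_mul, star_mul', Complex.star_def,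
      Complex.conj_ofReal]
    rw [show (starRingEnd ℂ) (M j i) = Mᴴ i j from rfl, this]
  · intro x
    have h1 := hM.dotProduct_mulVec_nonneg x
    have : star x ⬝ᵥ ((r : ℂ) • M) *ᵥ x = (r : ℂ) * (star x ⬝ᵥ M *ᵥ x) := by
      simp [smul_mulVec, dotProduct_smul]
    rw [this]
    exact mul_nonneg (by exact_mod_cast Complex.zero_le_real.mpr hr) h1

lemma kron_posSemidef {n m : ℕ} {A : Matrix (Fin n) (Fin n) ℂ} {B : Matrix (Fin m) (Fin m) ℂ}
    (hA : A.PosSemidef) (hB : B.PosSemidef) : (A ⊗ₖ B).PosSemidef := by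
  exact hA.kronecker hB

lemma maxEnt_posSemidef (d : ℕ) : (maxEnt d).PosSemidef := by
  have h : maxEnt d = (((d : ℝ)⁻¹ : ℝ) : ℂ) •
      vecMulVec (fun p : Fin d × Fin d => if p.1 = p.2 then (1:ℂ) else 0)
        (star fun p : Fin d × Fin d => if p.1 = p.2 then (1:ℂ) else 0) := by
    ext ⟨i,a⟩ ⟨j,b⟩
    simp only [maxEnt, Matrix.smul_apply, vecMulVec_apply, Pi.star_apply, smul_eq_mul]
    by_cases h1 : i = a <;> by_cases h2 : j = b <;>
      simp [h1, h2, one_div, Complex.ofReal_inv]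
  rw [h]
  exact posSemidef_real_smul' (posSemidef_vecMulVec' _) (by positivity)

lemma conj_dot {n : Type*} [Fintype n] (u v : n → ℂ) :
    (starRingEnd ℂ) (star u ⬝ᵥ v) = star v ⬝ᵥ u := by
  simp [dotProduct, map_sum, mul_comm]

lemma adj_dot {n : Type*} [Fintype n] (M : Matrix n n ℂ) (u v : n → ℂ) :
    star u ⬝ᵥ (M *ᵥ v) = star (Mᴴ *ᵥ u) ⬝ᵥ v := by
  rw [dotProduct_mulVec, star_mulVec, conjTranspose_conjTranspose]

lemma dot_sum {ι n : Type*} [Fintype n] (s : Finset ι) (u : n → ℂ) (f : ι → n → ℂ) :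
    u ⬝ᵥ (∑ i ∈ s, f i) = ∑ i ∈ s, u ⬝ᵥ f i := by
  simp only [dotProduct, Finset.sum_apply, Finset.mul_sum]
  exact Finset.sum_comm

/-- The product vectors `\bar e_k ⊗ ψ_k`. -/
def wVec {d : ℕ} (e ψ : Fin d → Fin d → ℂ) (k : Fin d) : Fin d × Fin d → ℂ :=
  fun p => (starRingEnd ℂ) (e k p.1) * ψ k p.2

/-- The CQ map as a function. -/
def Phifun {d : ℕ} (e ψ : Fin d → Fin d → ℂ) (ρ : Matrix (Fin d) (Fin d) ℂ) :
    Matrix (Fin d) (Fin d) ℂ :=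
  ∑ k, (star (e k) ⬝ᵥ ρ *ᵥ e k) • rankOne (ψ k)

/-- The Choi matrix of the CQ map. -/
def CPhiMat {d : ℕ} (e ψ : Fin d → Fin d → ℂ) : Matrix (Fin d × Fin d) (Fin d × Fin d) ℂ :=
  ((d : ℂ))⁻¹ • ∑ k, vecMulVec (wVec e ψ k) (star (wVec e ψ k))

lemma wVec_dot {d : ℕ} (e ψ : Fin d → Fin d → ℂ) (k l : Fin d) :
    star (wVec e ψ k) ⬝ᵥ wVec e ψ l = (star (e l) ⬝ᵥ e k) * (star (ψ k) ⬝ᵥ ψ l) := by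
  simp only [dotProduct, wVec, Pi.star_apply, star_mul', RCLike.star_def, starRingEnd_self_apply]
  rw [Fintype.sum_prod_type, Finset.sum_mul_sum]
  congr 1; ext i; congr 1; ext a; ring

lemma wVec_ortho {d : ℕ} {e ψ : Fin d → Fin d → ℂ}
    (hON : ∀ j k, star (e j) ⬝ᵥ e k = if j = k then 1 else 0)
    (hψ : ∀ k, star (ψ k) ⬝ᵥ ψ k = 1) (k l : Fin d) :
    star (wVec e ψ k) ⬝ᵥ wVec e ψ l = if k = l then 1 else 0 := by
  rw [wVec_dot, hON]
  rcases eq_or_ne k l with rfl | h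
  · simp [hψ]
  · simp [h, Ne.symm h]

lemma choi_Phifun (d : ℕ) (e ψ : Fin d → Fin d → ℂ) :
    tensorId d (Phifun e ψ) (maxEnt d) = CPhiMat e ψ := by
  ext ⟨i,a⟩ ⟨j,b⟩
  simp only [tensorId, Phifun, maxEnt, CPhiMat, Matrix.sum_apply, Matrix.smul_apply,
    smul_eq_mul, rankOne, vecMulVec_apply, Pi.star_apply, wVec]
  rw [Finset.mul_sum]
  apply Finset.sum_congr rfl
  intro k _
  have h : star (e k) ⬝ᵥ (fun a' b' => if i = a' ∧ j = b' then (1:ℂ)/d else 0) *ᵥ e k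
       = (1/d : ℂ) * ((starRingEnd ℂ) (e k i) * e k j) := by
    simp only [dotProduct, mulVec, ite_and, mul_ite, ite_mul, mul_zero, zero_mul,
      Pi.star_apply, RCLike.star_def]
    have h1 : ∀ x : Fin d, (∑ x_1 : Fin d, if i = x then if j = x_1 then (1:ℂ)/d * e k x_1 else 0 else 0) = if i = x then (1:ℂ)/d * e k j else 0 := by
      intro x
      split <;> simp [Finset.sum_ite_eq]
    simp only [one_div] at h1 ⊢
    rw [Finset.sum_congr rfl (fun x _ => by rw [h1 x])]
    simp [Finset.sum_ite_eq]
    ring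
  rw [h]
  simp only [star_mul', starRingEnd_self_apply, RCLike.star_def]
  field_simp

lemma spanProp {d : ℕ} {e ψ : Fin d → Fin d → ℂ}
    (hw : ∀ k l, star (wVec e ψ k) ⬝ᵥ wVec e ψ l = if k = l then 1 else 0)
    (M : Matrix (Fin d × Fin d) (Fin d × Fin d) ℂ) (hM : M.PosSemidef)
    (hsupp : ∀ v, (∀ k, star (wVec e ψ k) ⬝ᵥ v = 0) → M *ᵥ v = 0)
    (u : Fin d × Fin d → ℂ) :
    M *ᵥ u = ∑ k, (star (wVec e ψ k) ⬝ᵥ (M *ᵥ u)) • wVec e ψ k := by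
  set w := wVec e ψ
  set z := M *ᵥ u with hz
  set v := z - ∑ k, (star (w k) ⬝ᵥ z) • w k with hv
  have hvk : ∀ m, star (w m) ⬝ᵥ v = 0 := by
    intro m
    rw [hv, dotProduct_sub]
    rw [show star (w m) ⬝ᵥ (∑ k, (star (w k) ⬝ᵥ z) • w k)
        = ∑ k, (star (w k) ⬝ᵥ z) * (star (w m) ⬝ᵥ w k) by
      rw [dot_sum]
      exact Finset.sum_congr rfl fun k _ => by rw [dotProduct_smul]; simp [smul_eq_mul]]
    rw [Finset.sum_eq_single m]
    · rw [hw m m]; simp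
    · intro k _ hk; rw [hw m k, if_neg (Ne.symm hk)]; ring
    · simp
  have hMv : M *ᵥ v = 0 := hsupp v hvk
  have h1 : star v ⬝ᵥ z = 0 := by
    rw [hz, adj_dot, hM.1.eq, hMv]
    simp
  have h2 : star v ⬝ᵥ z = star v ⬝ᵥ v := by
    have hzv : z = v + ∑ k, (star (w k) ⬝ᵥ z) • w k := by
      rw [hv]; abel
    nth_rewrite 1 [hzv]
    rw [dotProduct_add, dot_sum]
    have : ∀ k, star v ⬝ᵥ ((star (w k) ⬝ᵥ z) • w k) = 0 := by
      intro k
      rw [dotProduct_smul]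
      have : star v ⬝ᵥ w k = 0 := by
        have := hvk k
        have h3 := conj_dot (w k) v
        rw [this] at h3
        simpa using h3.symm
      rw [this]; simp
    rw [Finset.sum_congr rfl fun k _ => this k]
    simp
  have hv0 : v = 0 := by
    have := h1 ▸ h2
    exact dotProduct_star_self_eq_zero.mp this.symm
  have := hv ▸ hv0
  exact sub_eq_zero.mp this

lemma kron_mulVec_prod {d : ℕ} (A B : Matrix (Fin d) (Fin d) ℂ) (f g : Fin d → ℂ) :
    (A ⊗ₖ B) *ᵥ (fun p : Fin d × Fin d => f p.1 * g p.2)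
      = fun p => (A *ᵥ f) p.1 * (B *ᵥ g) p.2 := by
  funext p
  simp only [mulVec, dotProduct, kroneckerMap_apply, Fintype.sum_prod_type]
  rw [Finset.sum_mul_sum]
  apply Finset.sum_congr rfl; intro j _
  apply Finset.sum_congr rfl; intro b _
  ring

lemma dot_w_prod {d : ℕ} (e ψ : Fin d → Fin d → ℂ) (k : Fin d) (x y : Fin d → ℂ) :
    star (wVec e ψ k) ⬝ᵥ (fun p : Fin d × Fin d => x p.1 * y p.2)
      = (e k ⬝ᵥ x) * (star (ψ k) ⬝ᵥ y) := by
  simp only [dotProduct, wVec, Pi.star_apply, star_mul', RCLike.star_def,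
    starRingEnd_self_apply, Fintype.sum_prod_type]
  rw [Finset.sum_mul_sum]
  apply Finset.sum_congr rfl; intro j _
  apply Finset.sum_congr rfl; intro b _
  ring

lemma contractLemma {d : ℕ} {e ψ : Fin d → Fin d → ℂ}
    (hON : ∀ j k, star (e j) ⬝ᵥ e k = if j = k then 1 else 0)
    (x y : Fin d → ℂ) (c : Fin d → ℂ)
    (hexp : (fun p : Fin d × Fin d => x p.1 * y p.2) = ∑ m, c m • wVec e ψ m)
    (m : Fin d) :
    (e m ⬝ᵥ x) • y = (c m) • ψ m := by
  funext b
  have hEb := congrFun hexp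
  have h1 : ∑ i, e m i * (x i * y b) = (e m ⬝ᵥ x) * y b := by
    rw [dotProduct, Finset.sum_mul]
    apply Finset.sum_congr rfl; intro i _; ring
  have h2 : ∑ i, e m i * ((∑ m', c m' • wVec e ψ m') (i, b))
      = c m * ψ m b := by
    have : ∀ i : Fin d, (∑ m', c m' • wVec e ψ m') (i, b)
        = ∑ m', c m' * ((starRingEnd ℂ) (e m' i) * ψ m' b) := by
      intro i
      rw [Finset.sum_apply]
      apply Finset.sum_congr rfl; intro m' _
      simp [wVec, smul_eq_mul]
    simp only [this, Finset.mul_sum]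
    rw [Finset.sum_comm]
    have h3 : ∀ m', ∑ i, e m i * (c m' * ((starRingEnd ℂ) (e m' i) * ψ m' b))
        = c m' * ψ m' b * (star (e m') ⬝ᵥ e m) := by
      intro m'
      rw [dotProduct, Finset.mul_sum]
      apply Finset.sum_congr rfl; intro i _
      simp only [Pi.star_apply, RCLike.star_def]
      ring
    rw [Finset.sum_congr rfl fun m' _ => h3 m']
    simp only [hON]
    rw [Finset.sum_congr rfl (fun m' _ => by rw [mul_ite, mul_one, mul_zero])]
    simp [Finset.sum_ite_eq]
  calc (e m ⬝ᵥ x) * y b = ∑ i, e m i * (x i * y b) := h1.symm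
    _ = ∑ i, e m i * ((∑ m', c m' • wVec e ψ m') (i, b)) := by
        apply Finset.sum_congr rfl; intro i _
        rw [hEb (i,b)]
    _ = c m * ψ m b := h2

end Helpers

lemma term_zero {d : ℕ} {e ψ : Fin d → Fin d → ℂ}
    (hON : ∀ j k, star (e j) ⬝ᵥ e k = if j = k then 1 else 0)
    (hψ : ∀ k, star (ψ k) ⬝ᵥ ψ k = 1)
    {A B : Matrix (Fin d) (Fin d) ℂ} (hA : A.PosSemidef) (hB : B.PosSemidef)
    (hsupp : ∀ v, (∀ m, star (wVec e ψ m) ⬝ᵥ v = 0) → (A ⊗ₖ B) *ᵥ v = 0)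
    {k l : Fin d} (hkl : ∀ t : ℂ, ψ l ≠ t • ψ k) :
    star (wVec e ψ k) ⬝ᵥ ((A ⊗ₖ B) *ᵥ wVec e ψ l) = 0 := by
  set x := A *ᵥ star (e l) with hx
  set y := B *ᵥ ψ l with hy
  have hz : (A ⊗ₖ B) *ᵥ wVec e ψ l = fun p : Fin d × Fin d => x p.1 * y p.2 := by
    rw [show wVec e ψ l = fun p : Fin d × Fin d => (star (e l)) p.1 * ψ l p.2 from rfl,
      kron_mulVec_prod]
  by_contra h
  rw [hz, dot_w_prod] at h
  have hα : e k ⬝ᵥ x ≠ 0 := left_ne_zero_of_mul h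
  have hβ : star (ψ k) ⬝ᵥ y ≠ 0 := right_ne_zero_of_mul h
  have hexp := spanProp (wVec_ortho hON hψ) (A ⊗ₖ B) (kron_posSemidef hA hB) hsupp (wVec e ψ l)
  rw [hz] at hexp
  have hexp' : (fun p : Fin d × Fin d => x p.1 * y p.2)
      = ∑ m, (star (wVec e ψ m) ⬝ᵥ (fun p : Fin d × Fin d => x p.1 * y p.2)) • wVec e ψ m := hexp
  have hdiam : ∀ m, (e m ⬝ᵥ x) • y
      = ((e m ⬝ᵥ x) * (star (ψ m) ⬝ᵥ y)) • ψ m := by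
    intro m
    have hc := contractLemma hON x y
      (fun m' => star (wVec e ψ m') ⬝ᵥ (fun p : Fin d × Fin d => x p.1 * y p.2)) hexp' m
    rw [dot_w_prod] at hc
    exact hc
  have hyk : y = (star (ψ k) ⬝ᵥ y) • ψ k := by
    have h1 := hdiam k
    have h2 : ((e k ⬝ᵥ x)⁻¹ * (e k ⬝ᵥ x)) • y
        = ((e k ⬝ᵥ x)⁻¹ * ((e k ⬝ᵥ x) * (star (ψ k) ⬝ᵥ y))) • ψ k := by
      rw [mul_smul, h1, smul_smul]
    rwa [inv_mul_cancel₀ hα, one_smul, ← mul_assoc, inv_mul_cancel₀ hα, one_mul] at h2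
  have hγ : e l ⬝ᵥ x ≠ 0 := by
    intro h0
    have h1 : star (star (e l)) ⬝ᵥ (A *ᵥ star (e l)) = 0 := by
      rwa [star_star, ← hx]
    have h2 := (hA.dotProduct_mulVec_zero_iff (star (e l))).mp h1
    rw [← hx] at h2
    exact hα (by rw [h2, dotProduct_zero])
  have hyl : y = (star (ψ l) ⬝ᵥ y) • ψ l := by
    have h1 := hdiam l
    have h2 : ((e l ⬝ᵥ x)⁻¹ * (e l ⬝ᵥ x)) • y
        = ((e l ⬝ᵥ x)⁻¹ * ((e l ⬝ᵥ x) * (star (ψ l) ⬝ᵥ y))) • ψ l := by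
      rw [mul_smul, h1, smul_smul]
    rwa [inv_mul_cancel₀ hγ, one_smul, ← mul_assoc, inv_mul_cancel₀ hγ, one_mul] at h2
  have hψk0 : ψ k ≠ 0 := by
    intro h0
    have := hψ k
    rw [h0] at this
    simp at this
  have hy0 : y ≠ 0 := by
    rw [hyk]
    exact smul_ne_zero hβ hψk0
  have hδ : star (ψ l) ⬝ᵥ y ≠ 0 := by
    intro h0
    rw [hyl, h0, zero_smul] at hy0
    exact hy0 rfl
  apply hkl ((star (ψ l) ⬝ᵥ y)⁻¹ * (star (ψ k) ⬝ᵥ y))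
  calc ψ l = (star (ψ l) ⬝ᵥ y)⁻¹ • ((star (ψ l) ⬝ᵥ y) • ψ l) := by
        rw [smul_smul, inv_mul_cancel₀ hδ, one_smul]
    _ = (star (ψ l) ⬝ᵥ y)⁻¹ • y := by rw [← hyl]
    _ = (star (ψ l) ⬝ᵥ y)⁻¹ • ((star (ψ k) ⬝ᵥ y) • ψ k) := by rw [← hyk]
    _ = ((star (ψ l) ⬝ᵥ y)⁻¹ * (star (ψ k) ⬝ᵥ y)) • ψ k := by rw [smul_smul]

lemma sum_mulVec' {ι n : Type*} [Fintype n] (s : Finset ι) (M : ι → Matrix n n ℂ) (v : n → ℂ) :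
    (∑ i ∈ s, M i) *ᵥ v = ∑ i ∈ s, M i *ᵥ v := by
  funext j
  simp only [mulVec, dotProduct, Finset.sum_apply, Matrix.sum_apply, Finset.sum_mul]
  exact Finset.sum_comm

lemma vecMulVec_mulVec' {n : Type*} [Fintype n] (u v x : n → ℂ) :
    vecMulVec u v *ᵥ x = (v ⬝ᵥ x) • u := by
  funext i
  simp only [mulVec, dotProduct, vecMulVec_apply, Pi.smul_apply, smul_eq_mul]
  rw [Finset.sum_mul, Finset.sum_congr rfl (fun j (_ : j ∈ Finset.univ) => by ring : ∀ j ∈ Finset.univ, u i * v j * x j = v j * x j * u i)]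

lemma key_choi_eq {d : ℕ} {e ψ : Fin d → Fin d → ℂ}
    (hON : ∀ j k, star (e j) ⬝ᵥ e k = if j = k then 1 else 0)
    (hψ : ∀ k, star (ψ k) ⬝ᵥ ψ k = 1)
    {C₁ : Matrix (Fin d × Fin d) (Fin d × Fin d) ℂ}
    (hC₁ : C₁.PosSemidef)
    (hsep : IsSeparableMat C₁)
    (htr : ∀ i j : Fin d, ∑ a, C₁ (i,a) (j,a) = if i = j then ((d:ℂ))⁻¹ else 0)
    (hsupp0 : ∀ v, (∀ k, star (wVec e ψ k) ⬝ᵥ v = 0) → star v ⬝ᵥ (C₁ *ᵥ v) = 0) :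
    C₁ = CPhiMat e ψ := by
  obtain ⟨N, A, B, hA, hB, hsepeq⟩ := hsep
  set w := wVec e ψ with hwdef
  have hCsupp : ∀ v, (∀ k, star (w k) ⬝ᵥ v = 0) → C₁ *ᵥ v = 0 := by
    intro v hv
    exact (hC₁.dotProduct_mulVec_zero_iff v).mp (hsupp0 v hv)
  have hMi : ∀ i, (A i ⊗ₖ B i).PosSemidef := fun i => kron_posSemidef (hA i) (hB i)
  have hMsupp : ∀ i, ∀ v, (∀ k, star (w k) ⬝ᵥ v = 0) → (A i ⊗ₖ B i) *ᵥ v = 0 := by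
    intro i v hv
    have hsum : ∑ i, star v ⬝ᵥ ((A i ⊗ₖ B i) *ᵥ v) = 0 := by
      rw [← dot_sum, ← sum_mulVec', ← hsepeq]
      exact hsupp0 v hv
    have hnn : ∀ i ∈ Finset.univ, (0:ℂ) ≤ star v ⬝ᵥ ((A i ⊗ₖ B i) *ᵥ v) :=
      fun i _ => (hMi i).dotProduct_mulVec_nonneg v
    have hz := (Finset.sum_eq_zero_iff_of_nonneg hnn).mp hsum i (Finset.mem_univ i)
    exact ((hMi i).dotProduct_mulVec_zero_iff v).mp hz
  set c : Fin d → Fin d → ℂ := fun k l => star (w k) ⬝ᵥ (C₁ *ᵥ w l) with hcdef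
  have hexpand : ∀ l, C₁ *ᵥ w l = ∑ k, c k l • w k := fun l =>
    spanProp (wVec_ortho hON hψ) C₁ hC₁ hCsupp (w l)
  have hermc : ∀ k l, (starRingEnd ℂ) (c k l) = c l k := by
    intro k l
    rw [hcdef]
    simp only
    rw [conj_dot, star_mulVec, ← dotProduct_mulVec, hC₁.1.eq]
  -- reconstruction of `C₁` in terms of the orthonormal family `w`
  have hrecon : C₁ = ∑ k, ∑ l, c k l • vecMulVec (w k) (star (w l)) := by
    ext p q
    have h1 : C₁ p q = (C₁ *ᵥ Pi.single q 1) p := by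
      rw [mulVec_single]
      simp
    have h2 := spanProp (wVec_ortho hON hψ) C₁ hC₁ hCsupp (Pi.single q 1)
    have h3 : ∀ l, star (w l) ⬝ᵥ (C₁ *ᵥ Pi.single q 1)
        = ∑ k, c l k * (starRingEnd ℂ) (w k q) := by
      intro l
      calc star (w l) ⬝ᵥ (C₁ *ᵥ Pi.single q 1)
          = star (C₁ᴴ *ᵥ w l) ⬝ᵥ Pi.single q 1 := adj_dot _ _ _
        _ = star (C₁ *ᵥ w l) ⬝ᵥ Pi.single q 1 := by rw [hC₁.1.eq]
        _ = (starRingEnd ℂ) ((C₁ *ᵥ w l) q) := by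
            rw [dotProduct_single]
            simp [Pi.star_apply]
        _ = (starRingEnd ℂ) (∑ k, c k l * w k q) := by
            rw [hexpand l]
            simp [Finset.sum_apply, smul_eq_mul]
        _ = ∑ k, c l k * (starRingEnd ℂ) (w k q) := by
            rw [map_sum]
            exact Finset.sum_congr rfl fun k _ => by rw [_root_.map_mul, hermc]
    calc C₁ p q = (C₁ *ᵥ Pi.single q 1) p := h1
      _ = ∑ l, (star (w l) ⬝ᵥ (C₁ *ᵥ Pi.single q 1)) * w l p := by
          conv_lhs => rw [h2]
          rw [Finset.sum_apply]
          exact Finset.sum_congr rfl fun l _ => by simp only [Pi.smul_apply, smul_eq_mul]; rfl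
      _ = ∑ l, (∑ k, c l k * (starRingEnd ℂ) (w k q)) * w l p :=
          Finset.sum_congr rfl fun l _ => by rw [h3 l]
      _ = (∑ k, ∑ l, c k l • vecMulVec (w k) (star (w l))) p q := by
          rw [Matrix.sum_apply]
          apply Finset.sum_congr rfl; intro l _
          rw [Matrix.sum_apply, Finset.sum_mul]
          apply Finset.sum_congr rfl; intro k _
          simp only [Matrix.smul_apply, vecMulVec_apply, smul_eq_mul, Pi.star_apply,
            RCLike.star_def]
          ring
  -- the partial-trace constraint
  have hT : ∀ k l, c k l * (star (ψ l) ⬝ᵥ ψ k) = if k = l then ((d:ℂ))⁻¹ else 0 := by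
    intro k l
    set T : Matrix (Fin d) (Fin d) ℂ := fun i j => ∑ a, C₁ (i,a) (j,a) with hTdef
    have way1 : e k ⬝ᵥ (T *ᵥ star (e l)) = if k = l then ((d:ℂ))⁻¹ else 0 := by
      have hTid : T = ((d:ℂ))⁻¹ • (1 : Matrix (Fin d) (Fin d) ℂ) := by
        ext i j
        show (∑ a, C₁ (i,a) (j,a)) = _
        rw [htr i j]
        simp only [Matrix.smul_apply, Matrix.one_apply, smul_eq_mul]
        split <;> simp
      rw [hTid, smul_mulVec, one_mulVec, dotProduct_smul, smul_eq_mul, dotProduct_comm,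
        hON l k]
      rcases eq_or_ne k l with rfl | hkl
      · simp
      · simp [hkl, Ne.symm hkl]
    have way2 : e k ⬝ᵥ (T *ᵥ star (e l)) = c k l * (star (ψ l) ⬝ᵥ ψ k) := by
      have hTsum : T = ∑ m, ∑ n, (c m n * (star (ψ n) ⬝ᵥ ψ m)) •
          vecMulVec (star (e m)) (e n) := by
        ext i j
        show (∑ a, C₁ (i,a) (j,a)) = _
        rw [Finset.sum_congr rfl (fun a _ => by rw [hrecon])]
        simp only [Matrix.sum_apply, Matrix.smul_apply, vecMulVec_apply, smul_eq_mul,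
          Pi.star_apply, RCLike.star_def]
        rw [Finset.sum_comm]
        apply Finset.sum_congr rfl; intro m _
        rw [Finset.sum_comm]
        apply Finset.sum_congr rfl; intro n _
        rw [show star (ψ n) ⬝ᵥ ψ m = ∑ a, (starRingEnd ℂ) (ψ n a) * ψ m a from rfl]
        rw [Finset.mul_sum, Finset.sum_mul]
        apply Finset.sum_congr rfl; intro a _
        simp only [hwdef, wVec, star_mul', RCLike.star_def, starRingEnd_self_apply,
          _root_.map_mul]
        ring
      rw [hTsum, sum_mulVec', dot_sum]
      rw [Finset.sum_congr rfl (fun m (_ : m ∈ Finset.univ) => by rw [sum_mulVec', dot_sum])]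
      have hterm : ∀ m n, e k ⬝ᵥ (((c m n * (star (ψ n) ⬝ᵥ ψ m)) •
          vecMulVec (star (e m)) (e n)) *ᵥ star (e l))
          = (c m n * (star (ψ n) ⬝ᵥ ψ m)) *
            ((if l = n then 1 else 0) * (if m = k then 1 else 0)) := by
        intro m n
        rw [smul_mulVec, dotProduct_smul, smul_eq_mul, vecMulVec_mulVec',
          dotProduct_smul, smul_eq_mul]
        congr 1
        rw [dotProduct_comm (e n), hON l n, dotProduct_comm (e k), hON m k]
      rw [Finset.sum_congr rfl (fun m (_ : m ∈ Finset.univ) =>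
        Finset.sum_congr rfl (fun n (_ : n ∈ Finset.univ) => hterm m n))]
      rw [Finset.sum_eq_single k]
      · rw [Finset.sum_eq_single l]
        · simp
        · intro n _ hn
          simp [Ne.symm hn]
        · simp
      · intro m _ hm
        apply Finset.sum_eq_zero
        intro n _
        simp [hm]
      · simp
    rw [← way2, way1]
  -- the coefficients
  have hc : ∀ k l, c k l = if k = l then ((d:ℂ))⁻¹ else 0 := by
    intro k l
    rcases eq_or_ne k l with rfl | hkl
    · have h := hT k k
      rw [hψ k, mul_one] at h
      simpa using h
    · rw [if_neg hkl]
      by_cases hpar : ∃ t : ℂ, ψ l = t • ψ k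
      · obtain ⟨t, ht⟩ := hpar
        have h3 : star (ψ l) ⬝ᵥ ψ k = (starRingEnd ℂ) t := by
          rw [ht, star_smul, smul_dotProduct, hψ k]
          simp [RCLike.star_def]
        have ht0 : (starRingEnd ℂ) t ≠ 0 := by
          intro h0
          have h1 := hψ l
          rw [ht, star_smul, smul_dotProduct, dotProduct_smul, hψ k] at h1
          rw [show (star t : ℂ) = (starRingEnd ℂ) t from rfl, h0] at h1
          simp at h1
        have h2 := hT k l
        rw [if_neg hkl, h3] at h2
        exact (mul_eq_zero.mp h2).resolve_right ht0
      · push_neg at hpar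
        rw [hcdef]
        simp only
        rw [hsepeq, sum_mulVec', dot_sum]
        apply Finset.sum_eq_zero
        intro i _
        exact term_zero hON hψ (hA i) (hB i) (hMsupp i) hpar
  -- conclusion
  rw [hrecon]
  rw [show CPhiMat e ψ = ((d:ℂ))⁻¹ • ∑ k, vecMulVec (w k) (star (w k)) from rfl]
  rw [Finset.smul_sum]
  apply Finset.sum_congr rfl
  intro k _
  rw [Finset.sum_congr rfl (fun l (_ : l ∈ Finset.univ) => by rw [hc k l, ite_smul, zero_smul])]
  rw [Finset.sum_ite_eq]
  simp

lemma phifun_linear {d : ℕ} (e ψ : Fin d → Fin d → ℂ) : IsLinearMap ℂ (Phifun e ψ) := by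
  constructor
  · intro ρ σ
    unfold Phifun
    rw [← Finset.sum_add_distrib]
    apply Finset.sum_congr rfl; intro k _
    rw [add_mulVec, dotProduct_add, add_smul]
  · intro t ρ
    unfold Phifun
    rw [Finset.smul_sum]
    apply Finset.sum_congr rfl; intro k _
    rw [smul_mulVec, dotProduct_smul, smul_eq_mul, mul_smul]

lemma map_recon {d : ℕ} (hd : 0 < d)
    {Ψ : Matrix (Fin d) (Fin d) ℂ → Matrix (Fin d) (Fin d) ℂ} (hΨ : IsLinearMap ℂ Ψ)
    (ρ : Matrix (Fin d) (Fin d) ℂ) :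
    Ψ ρ = ∑ i, ∑ j, ((d : ℂ) * ρ i j) •
      (Matrix.of fun a b => tensorId d Ψ (maxEnt d) (i,a) (j,b)) := by
  have hd0 : (d : ℂ) ≠ 0 := Nat.cast_ne_zero.mpr hd.ne'
  set L := IsLinearMap.mk' Ψ hΨ with hL
  have hM : ∀ i j : Fin d, Matrix.single i j (ρ i j)
      = ((d : ℂ) * ρ i j) • (Matrix.of fun a b => maxEnt d (i,a) (j,b)) := by
    intro i j
    ext a b
    simp only [Matrix.single, maxEnt, Matrix.smul_apply, Matrix.of_apply, smul_eq_mul]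
    split
    · field_simp
    · ring
  have h1 : Ψ ρ = ∑ i, ∑ j, Ψ (Matrix.single i j (ρ i j)) := by
    calc Ψ ρ = L (∑ i, ∑ j, Matrix.single i j (ρ i j)) := by
          rw [← matrix_eq_sum_single]
          rfl
      _ = ∑ i, ∑ j, L (Matrix.single i j (ρ i j)) := by
          rw [map_sum]
          exact Finset.sum_congr rfl fun i _ => map_sum L _ _
      _ = ∑ i, ∑ j, Ψ (Matrix.single i j (ρ i j)) := rfl
  rw [h1]
  apply Finset.sum_congr rfl; intro i _
  apply Finset.sum_congr rfl; intro j _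
  rw [hM i j]
  have h2 : Ψ (((d : ℂ) * ρ i j) • (Matrix.of fun a b => maxEnt d (i,a) (j,b)))
      = ((d : ℂ) * ρ i j) • Ψ (Matrix.of fun a b => maxEnt d (i,a) (j,b)) :=
    hΨ.2 _ _
  rw [h2]
  rfl

lemma map_eq_of_choi {d : ℕ} (hd : 0 < d)
    {Ψ₁ Ψ₂ : Matrix (Fin d) (Fin d) ℂ → Matrix (Fin d) (Fin d) ℂ}
    (h1 : IsLinearMap ℂ Ψ₁) (h2 : IsLinearMap ℂ Ψ₂)
    (h : tensorId d Ψ₁ (maxEnt d) = tensorId d Ψ₂ (maxEnt d)) :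
    ∀ ρ, Ψ₁ ρ = Ψ₂ ρ := by
  intro ρ
  rw [map_recon hd h1 ρ, map_recon hd h2 ρ, h]

/-- Theorem 3, part A: an extreme CQ map is an extreme point of the set
of EBT maps. -/
theorem extreme_cq_is_extreme_in_ebt
    {d : ℕ} (ψ e : Fin d → (Fin d → ℂ))
    (hON : ∀ j k, star (e j) ⬝ᵥ e k = if j = k then 1 else 0)
    (hψ : ∀ k, star (ψ k) ⬝ᵥ ψ k = 1)
    (Φ₁ Φ₂ : Matrix (Fin d) (Fin d) ℂ → Matrix (Fin d) (Fin d) ℂ)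
    (h₁ : IsEBT Φ₁) (h₂ : IsEBT Φ₂)
    (a : ℝ) (ha0 : 0 < a) (ha1 : a < 1)
    (hdec : ∀ ρ, (∑ k, (star (e k) ⬝ᵥ ρ *ᵥ e k) • rankOne (ψ k)) =
        (a : ℂ) • Φ₁ ρ + ((1 - a : ℝ) : ℂ) • Φ₂ ρ) :
    Φ₁ = Φ₂ ∧ ∀ ρ, Φ₁ ρ = ∑ k, (star (e k) ⬝ᵥ ρ *ᵥ e k) • rankOne (ψ k) := by
  rcases Nat.eq_zero_or_pos d with rfl | hd0
  · constructor
    · funext ρ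
      ext i j
      exact i.elim0
    · intro ρ
      ext i j
      exact i.elim0
  obtain ⟨⟨hlin1, hCP1, hTP1⟩, hEB1⟩ := h₁
  obtain ⟨⟨hlin2, hCP2, hTP2⟩, hEB2⟩ := h₂
  set C1 := tensorId d Φ₁ (maxEnt d) with hC1def
  set C2 := tensorId d Φ₂ (maxEnt d) with hC2def
  have hPSD1 : C1.PosSemidef := hCP1 d hd0 (maxEnt d) (maxEnt_posSemidef d)
  have hPSD2 : C2.PosSemidef := hCP2 d hd0 (maxEnt d) (maxEnt_posSemidef d)
  have hsep1 : IsSeparableMat C1 := hEB1 d hd0 (maxEnt d) (maxEnt_posSemidef d)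
  have hsep2 : IsSeparableMat C2 := hEB2 d hd0 (maxEnt d) (maxEnt_posSemidef d)
  -- the convex decomposition at the level of Choi matrices
  have hcomb : CPhiMat e ψ = (a : ℂ) • C1 + ((1 - a : ℝ) : ℂ) • C2 := by
    rw [← choi_Phifun d e ψ]
    ext p q
    have hstep : Phifun e ψ (fun a' b' => maxEnt d (p.1, a') (q.1, b'))
        = (a : ℂ) • Φ₁ (fun a' b' => maxEnt d (p.1, a') (q.1, b'))
          + ((1 - a : ℝ) : ℂ) • Φ₂ (fun a' b' => maxEnt d (p.1, a') (q.1, b')) :=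
      hdec _
    show Phifun e ψ (fun a' b' => maxEnt d (p.1, a') (q.1, b')) p.2 q.2 = _
    rw [hstep]
    simp only [Matrix.add_apply, Matrix.smul_apply, smul_eq_mul]
    rfl
  -- partial trace constraints
  have htrace : ∀ (Φ' : Matrix (Fin d) (Fin d) ℂ → Matrix (Fin d) (Fin d) ℂ),
      TracePreserving Φ' → ∀ i j : Fin d,
      ∑ b, tensorId d Φ' (maxEnt d) (i,b) (j,b) = if i = j then ((d:ℂ))⁻¹ else 0 := by
    intro Φ' hTP i j
    have h1 : ∑ b, tensorId d Φ' (maxEnt d) (i,b) (j,b)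
        = (Φ' (fun a' b' => maxEnt d (i, a') (j, b'))).trace := rfl
    rw [h1]; refine (hTP _).trans ?_
    show ∑ a', (if i = a' ∧ j = a' then (1:ℂ)/d else 0) = _
    rcases eq_or_ne i j with rfl | hij
    · simp [Finset.sum_ite_eq, one_div]
    · rw [Finset.sum_eq_zero, if_neg hij]
      intro b _
      rw [if_neg]
      rintro ⟨rfl, rfl⟩
      exact hij rfl
  -- support constraints
  have hCPhi0 : ∀ v : Fin d × Fin d → ℂ, (∀ k, star (wVec e ψ k) ⬝ᵥ v = 0) →
      CPhiMat e ψ *ᵥ v = 0 := by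
    intro v hv
    rw [show CPhiMat e ψ = ((d:ℂ))⁻¹ • ∑ k, vecMulVec (wVec e ψ k) (star (wVec e ψ k)) from rfl]
    rw [smul_mulVec, sum_mulVec']
    rw [Finset.sum_congr rfl (fun k (_ : k ∈ Finset.univ) => by
      rw [vecMulVec_mulVec', hv k, zero_smul])]
    simp
  have hnn1 : ∀ v, (0:ℂ) ≤ star v ⬝ᵥ C1 *ᵥ v := hPSD1.dotProduct_mulVec_nonneg
  have hnn2 : ∀ v, (0:ℂ) ≤ star v ⬝ᵥ C2 *ᵥ v := hPSD2.dotProduct_mulVec_nonneg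
  have ha0' : (0:ℂ) ≤ (a:ℂ) := by exact_mod_cast Complex.zero_le_real.mpr ha0.le
  have ha1' : (0:ℂ) ≤ ((1 - a : ℝ):ℂ) := by
    exact_mod_cast Complex.zero_le_real.mpr (by linarith)
  have hsplit : ∀ v : Fin d × Fin d → ℂ, (∀ k, star (wVec e ψ k) ⬝ᵥ v = 0) →
      (a : ℂ) * (star v ⬝ᵥ C1 *ᵥ v) = 0 ∧ ((1 - a : ℝ) : ℂ) * (star v ⬝ᵥ C2 *ᵥ v) = 0 := by
    intro v hv
    have h0 : star v ⬝ᵥ (CPhiMat e ψ *ᵥ v) = 0 := by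
      rw [hCPhi0 v hv]
      simp
    rw [hcomb, add_mulVec, dotProduct_add, smul_mulVec, smul_mulVec,
      dotProduct_smul, dotProduct_smul, smul_eq_mul, smul_eq_mul] at h0
    exact (add_eq_zero_iff_of_nonneg (mul_nonneg ha0' (hnn1 v))
      (mul_nonneg ha1' (hnn2 v))).mp h0
  have hsupp1 : ∀ v, (∀ k, star (wVec e ψ k) ⬝ᵥ v = 0) → star v ⬝ᵥ (C1 *ᵥ v) = 0 := by
    intro v hv
    have := (hsplit v hv).1
    rcases mul_eq_zero.mp this with h | h
    · exact absurd h (by exact_mod_cast ha0.ne')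
    · exact h
  have hsupp2 : ∀ v, (∀ k, star (wVec e ψ k) ⬝ᵥ v = 0) → star v ⬝ᵥ (C2 *ᵥ v) = 0 := by
    intro v hv
    have := (hsplit v hv).2
    rcases mul_eq_zero.mp this with h | h
    · exact absurd h (by
        intro h0
        have : (1 - a : ℝ) = 0 := by exact_mod_cast h0
        linarith)
    · exact h
  have hC1eq : C1 = CPhiMat e ψ :=
    key_choi_eq hON hψ hPSD1 hsep1 (htrace Φ₁ hTP1) hsupp1
  have hC2eq : C2 = CPhiMat e ψ :=
    key_choi_eq hON hψ hPSD2 hsep2 (htrace Φ₂ hTP2) hsupp2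
  have heq1 : ∀ ρ, Φ₁ ρ = Phifun e ψ ρ :=
    map_eq_of_choi hd0 hlin1 (phifun_linear e ψ)
      (by rw [choi_Phifun d e ψ, ← hC1def]; exact hC1eq)
  have heq2 : ∀ ρ, Φ₂ ρ = Phifun e ψ ρ :=
    map_eq_of_choi hd0 hlin2 (phifun_linear e ψ)
      (by rw [choi_Phifun d e ψ, ← hC2def]; exact hC2eq)
  constructor
  · funext ρ
    rw [heq1 ρ, heq2 ρ]
  · intro ρ
    exact heq1 ρ
end
end

section
/- Let Φ(ρ) = Σ_{k=1}^d |ψ_k⟩⟨ψ_k| · ⟨e_k, ρ e_k⟩ be an extreme CQ map on d×d complex matrices, with {e_k} an orthonormal basis of ℂ^d and each ψ_k a unit vector. Then Φ is an extreme point of the set of completely positive trace-preserving maps if and only if ⟨ψ_j, ψ_k⟩ ≠ 0 for all j, k. (Theorem 3, part B.) -/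
open Matrix Kronecker BigOperators ComplexOrder

noncomputable section

namespace CQaux

variable {d : ℕ}

/-- Kraus-form map. -/
def kraus (K : Fin d → Matrix (Fin d) (Fin d) ℂ) :
    Matrix (Fin d) (Fin d) ℂ → Matrix (Fin d) (Fin d) ℂ :=
  fun ρ => ∑ l, K l * ρ * (K l)ᴴ

theorem kraus_linear (K : Fin d → Matrix (Fin d) (Fin d) ℂ) : IsLinearMap ℂ (kraus K) := by
  constructor
  · intro x y
    simp [kraus, Matrix.mul_add, Matrix.add_mul, Finset.sum_add_distrib]
  · intro c x
    simp [kraus, Matrix.mul_smul, Matrix.smul_mul, Finset.smul_sum]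

def blockK (n : ℕ) (K : Matrix (Fin d) (Fin d) ℂ) :
    Matrix (Fin n × Fin d) (Fin n × Fin d) ℂ :=
  fun p q => if p.1 = q.1 then K p.2 q.2 else 0

theorem tensorId_kraus (n : ℕ) (K : Fin d → Matrix (Fin d) (Fin d) ℂ)
    (Γ : Matrix (Fin n × Fin d) (Fin n × Fin d) ℂ) :
    tensorId n (kraus K) Γ = ∑ l, blockK n (K l) * Γ * (blockK n (K l))ᴴ := by
  ext p q
  simp only [tensorId, kraus, Matrix.sum_apply]
  refine Finset.sum_congr rfl fun l _ => ?_
  simp only [Matrix.mul_apply, Matrix.conjTranspose_apply, blockK, Fintype.sum_prod_type,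
    apply_ite star, star_zero, ite_mul, mul_ite, zero_mul, mul_zero,
    Finset.sum_ite_eq, Finset.sum_ite_eq', Finset.mem_univ, if_true]
  conv_rhs => rw [Finset.sum_comm]
  simp only [Finset.sum_ite_eq, Finset.mem_univ, if_true]
  refine Finset.sum_congr rfl fun b hb => ?_
  congr 1
  rw [Finset.sum_comm]
  simp only [Finset.sum_ite_eq, Finset.mem_univ, if_true]
  rfl

theorem psd_sum {m : Type*} [Fintype m] {ι : Type*} (s : Finset ι) (f : ι → Matrix m m ℂ)
    (h : ∀ i ∈ s, (f i).PosSemidef) : (∑ i ∈ s, f i).PosSemidef :=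
  Finset.sum_induction f Matrix.PosSemidef (fun _ _ ha hb => ha.add hb) Matrix.PosSemidef.zero h

theorem kraus_cp (K : Fin d → Matrix (Fin d) (Fin d) ℂ) : CompletelyPositive (kraus K) := by
  intro n _ Γ hΓ
  rw [tensorId_kraus]
  exact psd_sum _ _ fun l _ => hΓ.mul_mul_conjTranspose_same (blockK n (K l))

theorem kraus_tp (K : Fin d → Matrix (Fin d) (Fin d) ℂ)
    (hK : ∑ l, (K l)ᴴ * K l = 1) : TracePreserving (kraus K) := by
  intro X
  simp only [kraus, Matrix.trace_sum]
  have h : ∀ l ∈ Finset.univ, (K l * X * (K l)ᴴ).trace = ((K l)ᴴ * K l * X).trace := by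
    intro l _
    rw [Matrix.trace_mul_comm, ← Matrix.mul_assoc]
  rw [Finset.sum_congr rfl h, ← Matrix.trace_sum, ← Finset.sum_mul, hK, Matrix.one_mul]

theorem vecMulVec_star_psd {n : Type*} [Fintype n] (v : n → ℂ) :
    (Matrix.vecMulVec v (star v)).PosSemidef := by
  refine Matrix.PosSemidef.of_dotProduct_mulVec_nonneg ?_ ?_
  · ext i j
    simp [Matrix.conjTranspose_apply, Matrix.vecMulVec_apply, mul_comm]
  · intro x
    have : star x ⬝ᵥ (Matrix.vecMulVec v (star v)) *ᵥ x
        = star (star v ⬝ᵥ x) * (star v ⬝ᵥ x) := by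
      simp only [dotProduct, Matrix.mulVec, Matrix.vecMulVec_apply, Pi.star_apply,
        star_sum, star_mul', Finset.mul_sum, Finset.sum_mul, star_star]
      rw [Finset.sum_comm]
      refine Finset.sum_congr rfl fun i _ => Finset.sum_congr rfl fun j _ => ?_
      ring
    rw [this]
    exact star_mul_self_nonneg _

section
variable (ψ e : Fin d → (Fin d → ℂ))

/-- Kraus operators of the CQ map. -/
def Rk (l : Fin d) : Matrix (Fin d) (Fin d) ℂ := Matrix.vecMulVec (ψ l) (star (e l))

/-- Matrix units in the `e` basis. -/
def Fm (i i' : Fin d) : Matrix (Fin d) (Fin d) ℂ := Matrix.vecMulVec (e i) (star (e i'))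

theorem cq_eq_kraus :
    (fun ρ => ∑ k, (star (e k) ⬝ᵥ ρ *ᵥ e k) • rankOne (ψ k)) = kraus (Rk ψ e) := by
  funext ρ
  ext a b
  simp only [Matrix.sum_apply, kraus, Matrix.smul_apply, rankOne, Rk, Matrix.vecMulVec_apply,
    Matrix.mul_apply, Matrix.conjTranspose_apply, Pi.star_apply, dotProduct,
    Matrix.mulVec, star_mul', star_star, smul_eq_mul]
  refine Finset.sum_congr rfl fun l _ => ?_
  simp only [Finset.sum_mul, Finset.mul_sum]
  rw [Finset.sum_comm]
  refine Finset.sum_congr rfl fun x _ => Finset.sum_congr rfl fun y _ => ?_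
  ring

theorem completeness (hON : ∀ j k, star (e j) ⬝ᵥ e k = if j = k then 1 else 0) :
    ∀ x y, ∑ l, e l x * star (e l y) = if x = y then 1 else 0 := by
  have h1 : (Matrix.of fun i l => e l i)ᴴ * (Matrix.of fun i l => e l i) = 1 := by
    ext j k
    have := hON j k
    simpa [Matrix.mul_apply, Matrix.conjTranspose_apply, dotProduct,
      Matrix.one_apply] using this
  have h2 := mul_eq_one_comm.mp h1
  intro x y
  have := congrFun (congrFun h2 x) y
  simpa [Matrix.mul_apply, Matrix.conjTranspose_apply, Matrix.one_apply] using this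

theorem sum_RhR (hON : ∀ j k, star (e j) ⬝ᵥ e k = if j = k then 1 else 0)
    (hψ : ∀ k, star (ψ k) ⬝ᵥ ψ k = 1) :
    ∑ l, (Rk ψ e l)ᴴ * Rk ψ e l = 1 := by
  ext x y
  simp only [Matrix.sum_apply, Matrix.mul_apply, Matrix.conjTranspose_apply, Rk,
    Matrix.vecMulVec_apply, Pi.star_apply, star_mul', star_star]
  have step : ∀ l, (∑ a, star (ψ l a) * e l x * (ψ l a * star (e l y)))
      = e l x * star (e l y) := by
    intro l
    have hl := hψ l
    simp only [dotProduct, Pi.star_apply] at hl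
    calc (∑ a, star (ψ l a) * e l x * (ψ l a * star (e l y)))
        = (∑ a, star (ψ l a) * ψ l a) * (e l x * star (e l y)) := by
          rw [Finset.sum_mul]; exact Finset.sum_congr rfl fun a _ => by ring
      _ = e l x * star (e l y) := by rw [hl, one_mul]
  rw [Finset.sum_congr rfl fun l _ => step l, completeness e hON x y, Matrix.one_apply]

end

section
variable {ψ e : Fin d → (Fin d → ℂ)}


theorem linear_sum {D : ℕ} {Φ : Matrix (Fin D) (Fin D) ℂ → Matrix (Fin D) (Fin D) ℂ}
    (hlin : IsLinearMap ℂ Φ) {ι : Type*} (s : Finset ι)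
    (g : ι → Matrix (Fin D) (Fin D) ℂ) :
    Φ (∑ i ∈ s, g i) = ∑ i ∈ s, Φ (g i) := by
  have hc : Φ = ⇑(IsLinearMap.mk' Φ hlin) := rfl
  rw [hc, map_sum]

theorem linear_smul {D : ℕ} {Φ : Matrix (Fin D) (Fin D) ℂ → Matrix (Fin D) (Fin D) ℂ}
    (hlin : IsLinearMap ℂ Φ) (cc : ℂ) (g : Matrix (Fin D) (Fin D) ℂ) :
    Φ (cc • g) = cc • Φ g := hlin.2 cc g

theorem expand_basis (hON : ∀ j k, star (e j) ⬝ᵥ e k = if j = k then 1 else 0)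
    (ρ : Matrix (Fin d) (Fin d) ℂ) :
    ρ = ∑ i, ∑ i', (star (e i) ⬝ᵥ ρ *ᵥ e i') • Fm e i i' := by
  set W : Matrix (Fin d) (Fin d) ℂ := Matrix.of fun x i => e i x with hW
  have h2 : W * Wᴴ = 1 := by
    ext x y
    simpa [Matrix.mul_apply, hW, Matrix.conjTranspose_apply, Matrix.one_apply]
      using completeness e hON x y
  have hfm : ∀ N : Matrix (Fin d) (Fin d) ℂ,
      W * N * Wᴴ = ∑ i, ∑ i', N i i' • Fm e i i' := by
    intro N
    ext x y
    simp only [Matrix.mul_apply, Matrix.sum_apply, Matrix.smul_apply, Fm,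
      Matrix.vecMulVec_apply, Pi.star_apply, Matrix.conjTranspose_apply, hW, Matrix.of_apply,
      smul_eq_mul, Finset.sum_mul, Finset.mul_sum]
    rw [Finset.sum_comm]
    refine Finset.sum_congr rfl fun i _ => Finset.sum_congr rfl fun i' _ => ?_
    ring
  have hcoef : ∀ i i', (Wᴴ * ρ * W) i i' = star (e i) ⬝ᵥ ρ *ᵥ e i' := by
    intro i i'
    simp only [Matrix.mul_apply, Matrix.conjTranspose_apply, hW, Matrix.of_apply,
      dotProduct, Matrix.mulVec, Pi.star_apply, Finset.sum_mul, Finset.mul_sum]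
    rw [Finset.sum_comm]
    refine Finset.sum_congr rfl fun u _ => Finset.sum_congr rfl fun v _ => ?_
    ring
  calc ρ = (W * Wᴴ) * ρ * (W * Wᴴ) := by rw [h2, Matrix.one_mul, Matrix.mul_one]
  _ = W * (Wᴴ * ρ * W) * Wᴴ := by simp only [Matrix.mul_assoc]
  _ = ∑ i, ∑ i', (Wᴴ * ρ * W) i i' • Fm e i i' := hfm _
  _ = ∑ i, ∑ i', (star (e i) ⬝ᵥ ρ *ᵥ e i') • Fm e i i' := by
    refine Finset.sum_congr rfl fun i _ => Finset.sum_congr rfl fun i' _ => ?_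
    rw [hcoef]

theorem aux_main (hd : 1 ≤ d)
    (hON : ∀ j k, star (e j) ⬝ᵥ e k = if j = k then 1 else 0)
    (hψ : ∀ k, star (ψ k) ⬝ᵥ ψ k = 1)
    (h : ∀ j k, star (ψ j) ⬝ᵥ ψ k ≠ 0)
    (Φ₁ Φ₂ : Matrix (Fin d) (Fin d) ℂ → Matrix (Fin d) (Fin d) ℂ)
    (h1 : IsCPTP Φ₁) (h2 : IsCPTP Φ₂) (b c : ℝ) (hb : 0 < b) (hc : 0 < c)
    (hΦ : ∀ ρ, (∑ k, (star (e k) ⬝ᵥ ρ *ᵥ e k) • rankOne (ψ k))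
        = (b : ℂ) • Φ₁ ρ + (c : ℂ) • Φ₂ ρ) :
    Φ₁ = fun ρ => ∑ k, (star (e k) ⬝ᵥ ρ *ᵥ e k) • rankOne (ψ k) := by
  set Φ : Matrix (Fin d) (Fin d) ℂ → Matrix (Fin d) (Fin d) ℂ :=
    fun ρ => ∑ k, (star (e k) ⬝ᵥ ρ *ᵥ e k) • rankOne (ψ k) with hΦdef
  set u : Fin d × Fin d → ℂ := fun p => e p.1 p.2 with hu
  set Γ0 : Matrix (Fin d × Fin d) (Fin d × Fin d) ℂ := Matrix.vecMulVec u (star u) with hΓ0def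
  set V : Matrix (Fin d × Fin d) (Fin d) ℂ :=
    Matrix.of (fun p l => if p.1 = l then ψ l p.2 else 0) with hV
  have hΓ0 : Γ0.PosSemidef := vecMulVec_star_psd u
  set C₁ := tensorId d Φ₁ Γ0 with hC₁def
  set C₂ := tensorId d Φ₂ Γ0 with hC₂def
  have hC₁psd : C₁.PosSemidef := h1.2.1 d hd Γ0 hΓ0
  have hC₂psd : C₂.PosSemidef := h2.2.1 d hd Γ0 hΓ0
  have block_eq : ∀ i i' : Fin d, (fun x y => Γ0 (i,x) (i',y)) = Fm e i i' := by
    intro i i'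
    funext x y
    simp [hΓ0def, hu, Matrix.vecMulVec_apply, Fm]
  have hC : ∀ p q, tensorId d Φ Γ0 p q = (V * Vᴴ) p q := by
    rintro ⟨i, a⟩ ⟨i', bb⟩
    show Φ (fun x y => Γ0 (i, x) (i', y)) a bb = (V * Vᴴ) (i, a) (i', bb)
    rw [block_eq i i']
    have hcoef : ∀ l, star (e l) ⬝ᵥ (Fm e i i') *ᵥ e l
        = (if l = i then (1:ℂ) else 0) * (if i' = l then (1:ℂ) else 0) := by
      intro l
      have h1' := hON l i
      have h2' := hON i' l
      calc star (e l) ⬝ᵥ (Fm e i i') *ᵥ e l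
          = (star (e l) ⬝ᵥ e i) * (star (e i') ⬝ᵥ e l) := by
            simp only [Fm, Matrix.mulVec, Matrix.vecMulVec_apply, dotProduct,
              Pi.star_apply, Finset.mul_sum, Finset.sum_mul]
            rw [Finset.sum_comm]
            refine Finset.sum_congr rfl fun x _ => Finset.sum_congr rfl fun v _ => ?_
            ring
        _ = _ := by rw [h1', h2']
    show (∑ l, (star (e l) ⬝ᵥ (Fm e i i') *ᵥ e l) • rankOne (ψ l)) a bb = _
    simp only [Matrix.sum_apply, Matrix.smul_apply, smul_eq_mul]
    rw [Finset.sum_congr rfl (fun l _ => by rw [hcoef l])]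
    simp only [Matrix.mul_apply, Matrix.conjTranspose_apply, hV, Matrix.of_apply,
      apply_ite star, star_zero, ite_mul, zero_mul, one_mul, mul_ite, mul_zero,
      Finset.sum_ite_eq, Finset.sum_ite_eq', Finset.mem_univ, if_true]
    by_cases hii : i' = i
    · subst hii
      simp [rankOne, Matrix.vecMulVec_apply]
    · rw [if_neg hii, if_neg (fun h' => hii (Eq.symm h'))]
  have hsplit : ∀ p q, (V * Vᴴ) p q = (b : ℂ) * C₁ p q + (c : ℂ) * C₂ p q := by
    intro p q
    rw [← hC p q]
    show (∑ k, (star (e k) ⬝ᵥ (fun x y => Γ0 (p.1, x) (q.1, y)) *ᵥ e k) • rankOne (ψ k)) p.2 q.2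
        = (b : ℂ) * C₁ p q + (c : ℂ) * C₂ p q
    rw [hΦ (fun x y => Γ0 (p.1, x) (q.1, y))]
    simp only [Matrix.add_apply, Matrix.smul_apply, smul_eq_mul]
    rfl
  have hVV : Vᴴ * V = 1 := by
    ext j k
    simp only [Matrix.mul_apply, Matrix.conjTranspose_apply, hV, Matrix.of_apply,
      Fintype.sum_prod_type, apply_ite star, star_zero, ite_mul, zero_mul, mul_ite, mul_zero,
      Finset.sum_ite_eq, Finset.sum_ite_eq', Finset.mem_univ, if_true]
    by_cases hjk : j = k
    · subst hjk
      have := hψ j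
      simp only [dotProduct, Pi.star_apply] at this
      simpa [Matrix.one_apply] using this
    · simp only [Matrix.one_apply, if_neg hjk]
      refine Finset.sum_eq_zero fun x _ => Finset.sum_eq_zero fun a _ => ?_
      by_cases hxk : x = k
      · subst hxk
        rw [if_pos rfl, if_neg (fun hkj => hjk hkj.symm)]
      · rw [if_neg hxk]
  have kernel : ∀ x : Fin d × Fin d → ℂ, Vᴴ *ᵥ x = 0 → C₁ *ᵥ x = 0 := by
    intro x hx
    obtain ⟨B, hB⟩ : ∃ B : Matrix (Fin d × Fin d) (Fin d × Fin d) ℂ, C₁ = Bᴴ * B := by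
      open MatrixOrder in exact CStarAlgebra.nonneg_iff_eq_star_mul_self.mp hC₁psd.nonneg
    have hq0 : star x ⬝ᵥ ((V * Vᴴ) *ᵥ x) = 0 := by
      rw [← Matrix.mulVec_mulVec, hx, Matrix.mulVec_zero, dotProduct_zero]
    have hsum2 : star x ⬝ᵥ ((V * Vᴴ) *ᵥ x)
        = (b : ℂ) * (star x ⬝ᵥ C₁ *ᵥ x) + (c : ℂ) * (star x ⬝ᵥ C₂ *ᵥ x) := by
      have hmat : (V * Vᴴ) *ᵥ x = fun p => ∑ q, ((b:ℂ) * C₁ p q + (c:ℂ) * C₂ p q) * x q := by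
        funext p
        simp only [Matrix.mulVec, dotProduct]
        exact Finset.sum_congr rfl fun q _ => by rw [hsplit p q]
      rw [hmat]
      simp only [dotProduct, Matrix.mulVec, Finset.mul_sum, mul_add, add_mul,
        Finset.sum_add_distrib]
      congr 1 <;>
        exact Finset.sum_congr rfl fun p _ => Finset.sum_congr rfl fun q _ => by ring
    have hq1 : 0 ≤ star x ⬝ᵥ C₁ *ᵥ x := hC₁psd.dotProduct_mulVec_nonneg x
    have hq2 : 0 ≤ star x ⬝ᵥ C₂ *ᵥ x := hC₂psd.dotProduct_mulVec_nonneg x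
    have hb' : (0:ℂ) ≤ (b:ℂ) := by
      rw [Complex.zero_le_real]; exact hb.le
    have hc' : (0:ℂ) ≤ (c:ℂ) := by
      rw [Complex.zero_le_real]; exact hc.le
    have hz : (b : ℂ) * (star x ⬝ᵥ C₁ *ᵥ x) = 0 := by
      have := (add_eq_zero_iff_of_nonneg (mul_nonneg hb' hq1) (mul_nonneg hc' hq2)).mp
        (by rw [← hsum2, hq0])
      exact this.1
    have hbne : (b : ℂ) ≠ 0 := by
      simpa using ne_of_gt hb
    have hq1z : star x ⬝ᵥ C₁ *ᵥ x = 0 := by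
      rcases mul_eq_zero.mp hz with h' | h'
      · exact absurd h' hbne
      · exact h'
    have hBx : B *ᵥ x = 0 := by
      have : star (B *ᵥ x) ⬝ᵥ (B *ᵥ x) = 0 := by
        rw [Matrix.star_mulVec]
        rw [← Matrix.dotProduct_mulVec, Matrix.mulVec_mulVec, ← hB]
        exact hq1z
      exact dotProduct_star_self_eq_zero.mp this
    rw [hB, ← Matrix.mulVec_mulVec, hBx, Matrix.mulVec_zero]
  have h0V : Vᴴ * (1 - V * Vᴴ) = 0 := by
    rw [Matrix.mul_sub, Matrix.mul_one, ← Matrix.mul_assoc, hVV, Matrix.one_mul, sub_self]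
  have hC1P : C₁ * (1 - V * Vᴴ) = 0 := by
    ext p q
    have hx : Vᴴ *ᵥ ((1 - V * Vᴴ) *ᵥ Pi.single q 1) = 0 := by
      rw [Matrix.mulVec_mulVec, h0V, Matrix.zero_mulVec]
    have hker := kernel _ hx
    have hcol : (C₁ * (1 - V * Vᴴ)) *ᵥ Pi.single q 1 = 0 := by
      rw [← Matrix.mulVec_mulVec]; exact hker
    have h4 := congrFun hcol p
    simpa [Matrix.mulVec_single] using h4
  have hC1a : C₁ = C₁ * (V * Vᴴ) := by
    rw [Matrix.mul_sub, Matrix.mul_one] at hC1P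
    exact (sub_eq_zero.mp hC1P)
  have hPC1 : C₁ = (V * Vᴴ) * C₁ := by
    have hh := congrArg Matrix.conjTranspose hC1a
    rw [Matrix.conjTranspose_mul, Matrix.conjTranspose_mul, Matrix.conjTranspose_conjTranspose,
      hC₁psd.1] at hh
    exact hh
  have hC1eq : C₁ = V * (Vᴴ * C₁ * V) * Vᴴ := by
    calc C₁ = (V * Vᴴ) * C₁ := hPC1
    _ = (V * Vᴴ) * (C₁ * (V * Vᴴ)) := by rw [← hC1a]
    _ = V * (Vᴴ * C₁ * V) * Vᴴ := by simp only [Matrix.mul_assoc]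
  have hT : ∀ i i' : Fin d, (∑ a, C₁ (i,a) (i',a)) = if i = i' then 1 else 0 := by
    intro i i'
    have h5 : ∀ a : Fin d, C₁ (i,a) (i',a) = Φ₁ (Fm e i i') a a := by
      intro a
      show Φ₁ (fun x y => Γ0 (i, x) (i', y)) a a = _
      rw [block_eq i i']
    rw [Finset.sum_congr rfl fun a _ => h5 a]
    have htr : ∑ a, Φ₁ (Fm e i i') a a = (Φ₁ (Fm e i i')).trace := by
      simp [Matrix.trace, Matrix.diag]
    rw [htr, h1.2.2]
    have h7 := congrArg star (hON i i')
    simp only [dotProduct, Pi.star_apply, star_sum, star_mul', star_star,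
      apply_ite (star : ℂ → ℂ), star_one, star_zero] at h7
    simp only [Matrix.trace, Matrix.diag, Fm, Matrix.vecMulVec_apply, Pi.star_apply]
    rw [← h7]
  have key : ∀ i i' : Fin d,
      (Vᴴ * C₁ * V) i i' * (star (ψ i') ⬝ᵥ ψ i) = if i = i' then 1 else 0 := by
    have hrep : ∀ (N : Matrix (Fin d) (Fin d) ℂ) (i i' : Fin d),
        (∑ a, (V * N * Vᴴ) (i,a) (i',a)) = N i i' * (star (ψ i') ⬝ᵥ ψ i) := by
      intro N i i'
      simp only [Matrix.mul_apply, Matrix.conjTranspose_apply, hV, Matrix.of_apply,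
        apply_ite star, star_zero, ite_mul, zero_mul, mul_ite, mul_zero,
        Finset.sum_ite_eq, Finset.sum_ite_eq', Finset.mem_univ, if_true]
      simp only [dotProduct, Pi.star_apply, Finset.mul_sum]
      refine Finset.sum_congr rfl fun a _ => ?_
      ring
    intro i i'
    rw [← hrep (Vᴴ * C₁ * V) i i', ← hC1eq]
    exact hT i i'
  have hM : Vᴴ * C₁ * V = 1 := by
    ext i i'
    by_cases hii : i = i'
    · subst hii
      have := key i i
      rw [hψ i, mul_one] at this
      simpa [Matrix.one_apply] using this
    · have := key i i'
      rw [if_neg hii] at this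
      have hz := (mul_eq_zero.mp this).resolve_right (h i' i)
      simpa [Matrix.one_apply, hii] using hz
  have hC1C : ∀ p q, C₁ p q = (V * Vᴴ) p q := by
    intro p q
    rw [hC1eq, hM, Matrix.mul_one]
  -- conclude
  funext ρ
  have lin1 : IsLinearMap ℂ Φ₁ := h1.1
  have linΦ : IsLinearMap ℂ Φ := by
    rw [hΦdef, cq_eq_kraus (ψ := ψ) (e := e)]
    exact kraus_linear _
  have hval : ∀ i i' : Fin d, Φ₁ (Fm e i i') = Φ (Fm e i i') := by
    intro i i'
    ext a b
    have h1v : Φ₁ (Fm e i i') a b = C₁ (i,a) (i',b) := by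
      rw [hC₁def]; unfold tensorId; rw [block_eq i i']
    have h2v : Φ (Fm e i i') a b = tensorId d Φ Γ0 (i,a) (i',b) := by
      unfold tensorId; rw [block_eq i i']
    rw [h1v, h2v, hC1C, hC]
  calc Φ₁ ρ = Φ₁ (∑ i, ∑ i', (star (e i) ⬝ᵥ ρ *ᵥ e i') • Fm e i i') := by
        rw [← expand_basis hON ρ]
  _ = ∑ i, ∑ i', (star (e i) ⬝ᵥ ρ *ᵥ e i') • Φ₁ (Fm e i i') := by
        rw [linear_sum lin1]
        refine Finset.sum_congr rfl fun i _ => ?_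
        rw [linear_sum lin1]
        exact Finset.sum_congr rfl fun i' _ => linear_smul lin1 _ _
  _ = ∑ i, ∑ i', (star (e i) ⬝ᵥ ρ *ᵥ e i') • Φ (Fm e i i') := by
        refine Finset.sum_congr rfl fun i _ => Finset.sum_congr rfl fun i' _ => ?_
        rw [hval]
  _ = Φ (∑ i, ∑ i', (star (e i) ⬝ᵥ ρ *ᵥ e i') • Fm e i i') := by
        rw [linear_sum linΦ]
        refine Finset.sum_congr rfl fun i _ => ?_
        rw [linear_sum linΦ]
        exact Finset.sum_congr rfl fun i' _ => (linear_smul linΦ _ _).symm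
  _ = Φ ρ := by rw [← expand_basis hON ρ]

end

section
variable (ψ e : Fin d → (Fin d → ℂ))

theorem dot_Fm (hON : ∀ j k, star (e j) ⬝ᵥ e k = if j = k then 1 else 0)
    (i i' l m : Fin d) :
    star (e l) ⬝ᵥ (Fm e i i') *ᵥ e m
      = (if l = i then (1:ℂ) else 0) * (if i' = m then (1:ℂ) else 0) := by
  calc star (e l) ⬝ᵥ (Fm e i i') *ᵥ e m
      = (star (e l) ⬝ᵥ e i) * (star (e i') ⬝ᵥ e m) := by
        simp only [Fm, Matrix.mulVec, Matrix.vecMulVec_apply, dotProduct,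
          Pi.star_apply, Finset.mul_sum, Finset.sum_mul]
        rw [Finset.sum_comm]
        refine Finset.sum_congr rfl fun x _ => Finset.sum_congr rfl fun v _ => ?_
        ring
    _ = _ := by rw [hON l i, hON i' m]

theorem RrR (x y : Fin d) (ρ : Matrix (Fin d) (Fin d) ℂ) :
    Rk ψ e x * ρ * (Rk ψ e y)ᴴ
      = (star (e x) ⬝ᵥ ρ *ᵥ e y) • Matrix.vecMulVec (ψ x) (star (ψ y)) := by
  ext a b
  simp only [Matrix.mul_apply, Matrix.conjTranspose_apply, Rk, Matrix.vecMulVec_apply,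
    Pi.star_apply, star_mul', star_star, Matrix.smul_apply, smul_eq_mul, dotProduct,
    Matrix.mulVec, Finset.sum_mul, Finset.mul_sum]
  rw [Finset.sum_comm]
  refine Finset.sum_congr rfl fun u _ => Finset.sum_congr rfl fun v _ => ?_
  ring

theorem RhR (x y : Fin d) :
    (Rk ψ e x)ᴴ * Rk ψ e y
      = (star (ψ x) ⬝ᵥ ψ y) • Matrix.vecMulVec (e x) (star (e y)) := by
  ext p q
  simp only [Matrix.mul_apply, Matrix.conjTranspose_apply, Rk, Matrix.vecMulVec_apply,
    Pi.star_apply, star_mul', star_star, Matrix.smul_apply, smul_eq_mul, dotProduct,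
    Finset.sum_mul]
  refine Finset.sum_congr rfl fun a _ => ?_
  ring

end

end CQaux

/-- Theorem 3, part B: an extreme CQ map is an extreme point of the set
of CPT maps iff no two of the `ψ_k` are orthogonal. -/
theorem extreme_cq_extreme_in_cptp_iff
    {d : ℕ} (ψ e : Fin d → (Fin d → ℂ))
    (hON : ∀ j k, star (e j) ⬝ᵥ e k = if j = k then 1 else 0)
    (hψ : ∀ k, star (ψ k) ⬝ᵥ ψ k = 1) :
    IsExtremePointOf IsCPTP
        (fun ρ => ∑ k, (star (e k) ⬝ᵥ ρ *ᵥ e k) • rankOne (ψ k)) ↔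
      ∀ j k, star (ψ j) ⬝ᵥ ψ k ≠ 0 := by
  open CQaux in
  constructor
  · -- extreme ⇒ no orthogonal pair
    intro hext
    by_contra hcon
    push_neg at hcon
    obtain ⟨j, k, hjk0⟩ := hcon
    have hjk : j ≠ k := by
      intro h'
      subst h'
      rw [hψ j] at hjk0
      exact one_ne_zero hjk0
    set R : Fin d → Matrix (Fin d) (Fin d) ℂ := Rk ψ e with hR
    set K1 : Fin d → Matrix (Fin d) (Fin d) ℂ :=
      fun l => if l = j then R j + R k else if l = k then 0 else R l with hK1
    set K2 : Fin d → Matrix (Fin d) (Fin d) ℂ :=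
      fun l => if l = j then R j - R k else if l = k then 0 else R l with hK2
    have hjk0' : star (ψ k) ⬝ᵥ ψ j = 0 := by
      have := congrArg star hjk0
      simpa [dotProduct, star_sum, star_mul', star_star, Finset.mul_sum,
        mul_comm] using this
    have hcross1 : (R j)ᴴ * R k = 0 := by
      rw [hR, RhR ψ e j k, hjk0, zero_smul]
    have hcross2 : (R k)ᴴ * R j = 0 := by
      rw [hR, RhR ψ e k j, hjk0', zero_smul]
    have split : ∀ f : Fin d → Matrix (Fin d) (Fin d) ℂ,
        ∑ l, f l = ∑ l ∈ (Finset.univ.erase j).erase k, f l + f k + f j := by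
      intro f
      rw [Finset.sum_erase_add _ _
        (Finset.mem_erase.mpr ⟨Ne.symm hjk, Finset.mem_univ k⟩),
        Finset.sum_erase_add _ _ (Finset.mem_univ j)]
    have hK1j : K1 j = R j + R k := by simp [hK1]
    have hK1k : K1 k = 0 := by simp [hK1, Ne.symm hjk]
    have hK2j : K2 j = R j - R k := by simp [hK2]
    have hK2k : K2 k = 0 := by simp [hK2, Ne.symm hjk]
    have hK1er : ∀ l ∈ (Finset.univ.erase j).erase k, K1 l = R l := by
      intro l hl
      obtain ⟨hlk, hl2⟩ := Finset.mem_erase.mp hl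
      obtain ⟨hlj, _⟩ := Finset.mem_erase.mp hl2
      simp [hK1, hlj, hlk]
    have hK2er : ∀ l ∈ (Finset.univ.erase j).erase k, K2 l = R l := by
      intro l hl
      obtain ⟨hlk, hl2⟩ := Finset.mem_erase.mp hl
      obtain ⟨hlj, _⟩ := Finset.mem_erase.mp hl2
      simp [hK2, hlj, hlk]
    have hRsum := sum_RhR (ψ := ψ) (e := e) hON hψ
    have hsum1 : ∑ l, (K1 l)ᴴ * K1 l = 1 := by
      rw [split (fun l => (K1 l)ᴴ * K1 l),
        Finset.sum_congr rfl (fun l hl => by rw [hK1er l hl]), hK1j, hK1k]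
      have hexp : (R j + R k)ᴴ * (R j + R k) = (R j)ᴴ * R j + (R k)ᴴ * R k := by
        rw [Matrix.conjTranspose_add, Matrix.add_mul, Matrix.mul_add, Matrix.mul_add,
          hcross1, hcross2]
        abel
      rw [hexp]
      rw [split (fun l => (R l)ᴴ * R l)] at hRsum
      rw [← hRsum]
      simp only [Matrix.conjTranspose_zero, Matrix.zero_mul]
      abel
    have hsum2 : ∑ l, (K2 l)ᴴ * K2 l = 1 := by
      rw [split (fun l => (K2 l)ᴴ * K2 l),
        Finset.sum_congr rfl (fun l hl => by rw [hK2er l hl]), hK2j, hK2k]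
      have hexp : (R j - R k)ᴴ * (R j - R k) = (R j)ᴴ * R j + (R k)ᴴ * R k := by
        rw [Matrix.conjTranspose_sub, Matrix.sub_mul, Matrix.mul_sub, Matrix.mul_sub,
          hcross1, hcross2]
        abel
      rw [hexp]
      rw [split (fun l => (R l)ᴴ * R l)] at hRsum
      rw [← hRsum]
      simp only [Matrix.conjTranspose_zero, Matrix.zero_mul]
      abel
    have hcptp1 : IsCPTP (kraus K1) := ⟨kraus_linear K1, kraus_cp K1, kraus_tp K1 hsum1⟩
    have hcptp2 : IsCPTP (kraus K2) := ⟨kraus_linear K2, kraus_cp K2, kraus_tp K2 hsum2⟩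
    have hhalf : (fun ρ => ∑ k, (star (e k) ⬝ᵥ ρ *ᵥ e k) • rankOne (ψ k))
        = (fun ρ => ((1/2 : ℝ) : ℂ) • kraus K1 ρ + ((1 - 1/2 : ℝ) : ℂ) • kraus K2 ρ) := by
      rw [cq_eq_kraus (ψ := ψ) (e := e)]
      funext ρ
      have hc : ((1 - 1/2 : ℝ) : ℂ) = ((1/2 : ℝ) : ℂ) := by norm_num
      rw [hc]
      have e1 : kraus K1 ρ = (∑ l ∈ (Finset.univ.erase j).erase k, R l * ρ * (R l)ᴴ)
          + ((R j + R k) * ρ * (R j + R k)ᴴ) := by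
        show ∑ l, K1 l * ρ * (K1 l)ᴴ = _
        rw [split (fun l => K1 l * ρ * (K1 l)ᴴ),
          Finset.sum_congr rfl (fun l hl => by rw [hK1er l hl]), hK1j, hK1k]
        simp only [Matrix.zero_mul, Matrix.conjTranspose_zero, Matrix.mul_zero, add_zero]
      have e2 : kraus K2 ρ = (∑ l ∈ (Finset.univ.erase j).erase k, R l * ρ * (R l)ᴴ)
          + ((R j - R k) * ρ * (R j - R k)ᴴ) := by
        show ∑ l, K2 l * ρ * (K2 l)ᴴ = _
        rw [split (fun l => K2 l * ρ * (K2 l)ᴴ),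
          Finset.sum_congr rfl (fun l hl => by rw [hK2er l hl]), hK2j, hK2k]
        simp only [Matrix.zero_mul, Matrix.conjTranspose_zero, Matrix.mul_zero, add_zero]
      have e3 : kraus R ρ = (∑ l ∈ (Finset.univ.erase j).erase k, R l * ρ * (R l)ᴴ)
          + R k * ρ * (R k)ᴴ + R j * ρ * (R j)ᴴ := by
        exact split (fun l => R l * ρ * (R l)ᴴ)
      rw [e1, e2, e3, ← smul_add]
      have hAB : ((∑ l ∈ (Finset.univ.erase j).erase k, R l * ρ * (R l)ᴴ)
            + ((R j + R k) * ρ * (R j + R k)ᴴ))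
          + ((∑ l ∈ (Finset.univ.erase j).erase k, R l * ρ * (R l)ᴴ)
            + ((R j - R k) * ρ * (R j - R k)ᴴ))
          = ((∑ l ∈ (Finset.univ.erase j).erase k, R l * ρ * (R l)ᴴ)
              + R k * ρ * (R k)ᴴ + R j * ρ * (R j)ᴴ)
            + ((∑ l ∈ (Finset.univ.erase j).erase k, R l * ρ * (R l)ᴴ)
              + R k * ρ * (R k)ᴴ + R j * ρ * (R j)ᴴ) := by
        simp only [Matrix.conjTranspose_add, Matrix.conjTranspose_sub, Matrix.add_mul,
          Matrix.sub_mul, Matrix.mul_add, Matrix.mul_sub]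
        abel
      rw [hAB, ← two_smul ℂ, smul_smul]
      norm_num
    obtain ⟨-, hex2⟩ := hext
    have hconc := hex2 (kraus K1) (kraus K2) hcptp1 hcptp2 (1/2) (by norm_num) (by norm_num)
      hhalf
    have heval : kraus K1 (Fm e j k) = Matrix.vecMulVec (ψ j) (star (ψ k)) := by
      show ∑ l, K1 l * Fm e j k * (K1 l)ᴴ = _
      rw [split (fun l => K1 l * Fm e j k * (K1 l)ᴴ),
        Finset.sum_congr rfl (fun l hl => by rw [hK1er l hl]), hK1j, hK1k]
      have hz : ∀ l ∈ (Finset.univ.erase j).erase k, R l * Fm e j k * (R l)ᴴ = 0 := by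
        intro l hl
        obtain ⟨hlk, hl2⟩ := Finset.mem_erase.mp hl
        obtain ⟨hlj, _⟩ := Finset.mem_erase.mp hl2
        rw [hR, RrR ψ e l l, dot_Fm e hON j k l l, if_neg hlj, zero_mul, zero_smul]
      rw [Finset.sum_eq_zero hz]
      have hjterm : (R j + R k) * Fm e j k * (R j + R k)ᴴ
          = Matrix.vecMulVec (ψ j) (star (ψ k)) := by
        simp only [Matrix.conjTranspose_add, Matrix.add_mul, Matrix.mul_add]
        rw [hR, RrR ψ e j j, RrR ψ e j k, RrR ψ e k j, RrR ψ e k k,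
          dot_Fm e hON j k j j, dot_Fm e hON j k j k,
          dot_Fm e hON j k k j, dot_Fm e hON j k k k]
        simp [Ne.symm hjk]
      rw [hjterm]
      simp only [Matrix.zero_mul, Matrix.conjTranspose_zero, Matrix.mul_zero, add_zero,
        zero_add]
    have heval0 : (∑ l, (star (e l) ⬝ᵥ (Fm e j k) *ᵥ e l) • rankOne (ψ l)) = 0 := by
      refine Finset.sum_eq_zero fun l _ => ?_
      rw [dot_Fm e hON j k l l]
      by_cases hl : l = j
      · subst hl
        rw [if_pos rfl, if_neg (Ne.symm hjk), mul_zero, zero_smul]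
      · rw [if_neg hl, zero_mul, zero_smul]
    have hfun := congrFun hconc.1 (Fm e j k)
    rw [heval] at hfun
    rw [heval0] at hfun
    obtain ⟨a, ha⟩ : ∃ a, ψ j a ≠ 0 := by
      by_contra hz
      push_neg at hz
      have := hψ j
      simp [dotProduct, hz] at this
    obtain ⟨bb, hbb⟩ : ∃ bb, ψ k bb ≠ 0 := by
      by_contra hz
      push_neg at hz
      have := hψ k
      simp [dotProduct, hz] at this
    have := congrFun (congrFun hfun a) bb
    simp only [Matrix.vecMulVec_apply, Pi.star_apply, Matrix.zero_apply] at this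
    exact (mul_ne_zero ha (star_ne_zero.mpr hbb)) this
  · -- no orthogonal pair ⇒ extreme
    intro h
    have hk := cq_eq_kraus (ψ := ψ) (e := e)
    constructor
    · refine ⟨?_, ?_, ?_⟩
      · rw [hk]; exact kraus_linear _
      · rw [hk]; exact kraus_cp _
      · rw [hk]; exact kraus_tp _ (sum_RhR (ψ := ψ) (e := e) hON hψ)
    · intro Φ₁ Φ₂ hP1 hP2 a ha0 ha1 heq
      by_cases hd : 1 ≤ d
      · have h1 := aux_main hd hON hψ h Φ₁ Φ₂ hP1 hP2 a (1-a) ha0 (by linarith)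
          (fun ρ => by rw [congrFun heq ρ])
        have h2 := aux_main hd hON hψ h Φ₂ Φ₁ hP2 hP1 (1-a) a (by linarith) ha0
          (fun ρ => by rw [congrFun heq ρ]; exact add_comm _ _)
        exact ⟨h1, h2⟩
      · have hd0 : d = 0 := by omega
        subst hd0
        constructor <;> (funext ρ; ext i x; exact i.elim0)
end
end
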